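/- arXiv:2401.01299 — 8 statements merged into one kernel-verified Lean document; each statement's English description precedes it below -/
import Mathlib

section
/- For all integers f,g,s,t≥1 there exist integers n1,n2≥1 with the following property: if G is a (K_{s,s},K_t)-free graph, z1,z2∈V(G) are adjacent, and there exists a (z1,z2,n1,n2)-crystal in G, then there exists a clear (z1,z2,f,g)-crystal in G. -/
/-- `G` is `H`-free: no induced subgraph of `G` is isomorphic to `H`. -/
def Free {V W : Type} (G : SimpleGraph V) (H : SimpleGraph W) : Prop :=
  IsEmpty (H ↪g G)

/-- A graph is chordal if it has no induced cycle on at least four vertices. -/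
def Chordal {V : Type} (G : SimpleGraph V) : Prop :=
  ∀ n : ℕ, 4 ≤ n → IsEmpty (SimpleGraph.cycleGraph n ↪g G)

/-- A graph is even-hole-free if it has no induced cycle on an even number (at least four)
of vertices. -/
def EvenHoleFree {V : Type} (G : SimpleGraph V) : Prop :=
  ∀ n : ℕ, 4 ≤ n → Even n → IsEmpty (SimpleGraph.cycleGraph n ↪g G)

/-- `cone F` is obtained from `F` by adding a universal vertex (the vertex `none`). -/
def cone {V : Type} (F : SimpleGraph V) : SimpleGraph (Option V) :=
  SimpleGraph.fromRel (fun u v => u = none ∨ ∃ a b, u = some a ∧ v = some b ∧ F.Adj a b)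
/-- `(S, S1, S2)` is a `(z1, z2, f, g)`-crystal in `G`. -/
structure IsCrystalIn {V : Type} (G : SimpleGraph V) (z1 z2 : V) (f g : ℕ)
    (S : Finset V) (S1 S2 : V → Finset V) : Prop where
  adj : G.Adj z1 z2
  cardS : S.card = f
  z1_not_mem : z1 ∉ S
  z2_not_mem : z2 ∉ S
  card1 : ∀ z ∈ S, (S1 z).card = g
  card2 : ∀ z ∈ S, (S2 z).card = g
  avoid1 : ∀ z ∈ S, ∀ x ∈ S1 z, x ∉ S ∧ x ≠ z1 ∧ x ≠ z2
  avoid2 : ∀ z ∈ S, ∀ x ∈ S2 z, x ∉ S ∧ x ≠ z1 ∧ x ≠ z2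
  disj11 : ∀ z ∈ S, ∀ z' ∈ S, z ≠ z' → Disjoint (S1 z) (S1 z')
  disj22 : ∀ z ∈ S, ∀ z' ∈ S, z ≠ z' → Disjoint (S2 z) (S2 z')
  disj12 : ∀ z ∈ S, ∀ z' ∈ S, Disjoint (S1 z) (S2 z')
  adj1 : ∀ z ∈ S, ∀ x ∈ S1 z, G.Adj x z1 ∧ G.Adj x z ∧ ¬ G.Adj x z2
  adj2 : ∀ z ∈ S, ∀ x ∈ S2 z, G.Adj x z2 ∧ G.Adj x z ∧ ¬ G.Adj x z1

/-- The vertex set `V(c)` of a crystal `(S, S1, S2)`. -/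
def crystalVerts {V : Type} (S : Finset V) (S1 S2 : V → Finset V) : Set V :=
  ↑S ∪ (⋃ z ∈ S, (↑(S1 z) : Set V)) ∪ (⋃ z ∈ S, (↑(S2 z) : Set V))

/-- Two finsets are anticomplete in `G`. -/
def Anticomp {V : Type} (G : SimpleGraph V) (A B : Finset V) : Prop :=
  ∀ u ∈ A, ∀ v ∈ B, ¬ G.Adj u v

/-- The crystal `(S, S1, S2)` is clear: `S` is a stable set and the `2f` sets
`S1 z, S2 z (z ∈ S)` are pairwise anticomplete stable sets. -/
def ClearCrystal {V : Type} (G : SimpleGraph V)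
    (S : Finset V) (S1 S2 : V → Finset V) : Prop :=
  (∀ u ∈ S, ∀ v ∈ S, ¬ G.Adj u v) ∧
  (∀ z ∈ S, (∀ u ∈ S1 z, ∀ v ∈ S1 z, ¬ G.Adj u v) ∧ (∀ u ∈ S2 z, ∀ v ∈ S2 z, ¬ G.Adj u v)) ∧
  (∀ z ∈ S, ∀ z' ∈ S, z ≠ z' → Anticomp G (S1 z) (S1 z') ∧ Anticomp G (S2 z) (S2 z')) ∧
  (∀ z ∈ S, ∀ z' ∈ S, Anticomp G (S1 z) (S2 z'))

/-!
Two Ramsey arguments do all the work. Since `G` has no `K_t`, the classical bound `2 ^ (t + p)`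
yields a stable `p`-subset of every large set; this makes `S` and all the `2f` sets `S_{i,z}`
stable. For two large stable sets `A, B`, fix `s + τ` vertices of `A` and halve `B` according to
adjacency with each of them in turn: what survives of `B` is complete to a set `C` of those
vertices and anticomplete to the rest, and `K_{s,s}`-freeness forces `|C| < s`. Applying this
once to every ordered pair of the `2f` sets makes them pairwise anticomplete.
-/

open Finset

variable {V : Type} {G : SimpleGraph V}

lemma anticomp_self_iff {A : Finset V} : Anticomp G A A ↔ G.IsIndepSet (A : Set V) := by
  refine ⟨fun h u hu v hv _ => h u hu v hv, fun h u hu v hv => ?_⟩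
  by_cases huv : u = v
  · exact huv ▸ G.irrefl
  · exact h hu hv huv

lemma Anticomp.mono {A B A' B' : Finset V} (h : Anticomp G A B) (hA : A' ⊆ A) (hB : B' ⊆ B) :
    Anticomp G A' B' :=
  fun u hu v hv => h u (hA hu) v (hB hv)

theorem exists_isClique_isIndepSet_card_add (G : SimpleGraph V) (p : ℕ) {B : Finset V}
    (hB : 2 ^ p ≤ #B) : ∃ C ⊆ B, ∃ D ⊆ B, #C + #D = p ∧
      G.IsClique (C : Set V) ∧ G.IsIndepSet (D : Set V) := by
  classical
  induction p generalizing B with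
  | zero => exact ⟨∅, empty_subset _, ∅, empty_subset _, rfl, by simp, by simp⟩
  | succ p ih =>
    obtain ⟨a, ha⟩ : B.Nonempty := card_pos.mp (lt_of_lt_of_le (Nat.two_pow_pos _) hB)
    have hsplit := card_filter_add_card_filter_not (s := B.erase a) (G.Adj a)
    rw [card_erase_of_mem ha] at hsplit
    have hsub {X : Finset V} {q : V → Prop} [DecidablePred q] (h : X ⊆ (B.erase a).filter q) :
        X ⊆ B ∧ a ∉ X ∧ ∀ b ∈ X, q b :=
      ⟨h.trans ((filter_subset _ _).trans (erase_subset _ _)),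
        fun haX => by simpa using h haX, fun b hb => (mem_filter.mp (h hb)).2⟩
    by_cases hN : 2 ^ p ≤ #((B.erase a).filter (G.Adj a))
    · obtain ⟨C, hC, D, hD, hcard, hCcl, hDind⟩ := ih hN
      obtain ⟨hCB, haC, hadj⟩ := hsub hC
      refine ⟨insert a C, insert_subset ha hCB, D, (hsub hD).1,
        by rw [card_insert_of_notMem haC]; omega, ?_, hDind⟩
      rw [coe_insert]
      exact hCcl.insert fun b hb _ => hadj b hb
    · obtain ⟨C, hC, D, hD, hcard, hCcl, hDind⟩ :=
        ih (B := (B.erase a).filter (¬ G.Adj a ·)) (by rw [pow_succ] at hB; omega)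
      obtain ⟨hDB, haD, hnadj⟩ := hsub hD
      refine ⟨C, (hsub hC).1, insert a D, insert_subset ha hDB,
        by rw [card_insert_of_notMem haD]; omega, hCcl, ?_⟩
      rw [coe_insert, ← SimpleGraph.isClique_compl]
      exact (SimpleGraph.isClique_compl (G := G) |>.mpr hDind).insert fun b hb hab =>
        (G.compl_adj a b).mpr ⟨hab, hnadj b hb⟩

theorem SimpleGraph.IsClique.card_lt_of_cliqueFree {t : ℕ} {C : Finset V}
    (hC : G.IsClique (C : Set V)) (hG : G.CliqueFree t) : #C < t := by
  by_contra! h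
  obtain ⟨C', hC', hcard⟩ := exists_subset_card_eq h
  exact hG C' ⟨hC.subset (coe_subset.mpr hC'), hcard⟩

theorem SimpleGraph.CliqueFree.exists_isIndepSet_card {t p : ℕ} (hG : G.CliqueFree t)
    {B : Finset V} (hB : 2 ^ (t + p) ≤ #B) :
    ∃ D ⊆ B, #D = p ∧ G.IsIndepSet (D : Set V) := by
  obtain ⟨C, -, D, hD, hcard, hC, hDind⟩ := exists_isClique_isIndepSet_card_add G (t + p) hB
  have hCt := hC.card_lt_of_cliqueFree hG
  obtain ⟨D', hD', rfl⟩ := exists_subset_card_eq (show p ≤ #D by omega)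
  exact ⟨D', hD'.trans hD, rfl, hDind.mono (coe_subset.mpr hD')⟩

theorem cliqueFree_of_free_top {t : ℕ} (h : Free G (⊤ : SimpleGraph (Fin t))) :
    G.CliqueFree t :=
  SimpleGraph.cliqueFree_iff.mpr ⟨fun f => h.false f.topEmbedding⟩

theorem exists_subset_complete_anticomp [DecidableEq V] (G : SimpleGraph V) (n : ℕ)
    (A : Finset V) {B : Finset V} (hB : n * 2 ^ #A ≤ #B) :
    ∃ C ⊆ A, ∃ B' ⊆ B, n ≤ #B' ∧ (∀ u ∈ C, ∀ v ∈ B', G.Adj u v) ∧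
      Anticomp G (A \ C) B' := by
  classical
  induction A using Finset.induction_on generalizing B with
  | empty =>
    exact ⟨∅, empty_subset _, B, subset_rfl, by simpa using hB, by simp, by simp [Anticomp]⟩
  | insert a A haA ih =>
    rw [card_insert_of_notMem haA, pow_succ, ← mul_assoc, mul_two] at hB
    have hsplit := card_filter_add_card_filter_not (s := B) (G.Adj a)
    by_cases hN : n * 2 ^ #A ≤ #(B.filter (G.Adj a))
    · obtain ⟨C, hC, B', hB', hn, hcomp, hanti⟩ := ih hN
      refine ⟨insert a C, insert_subset_insert a hC, B', hB'.trans (filter_subset _ _), hn,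
        ?_, ?_⟩
      · intro u hu v hv
        rcases mem_insert.mp hu with rfl | hu
        · exact (mem_filter.mp (hB' hv)).2
        · exact hcomp u hu v hv
      · rwa [insert_sdiff_insert, sdiff_insert_of_notMem haA]
    · obtain ⟨C, hC, B', hB', hn, hcomp, hanti⟩ :=
        ih (B := B.filter (¬ G.Adj a ·)) (by omega)
      refine ⟨C, hC.trans (subset_insert a A), B', hB'.trans (filter_subset _ _), hn, hcomp, ?_⟩
      rw [insert_sdiff_of_notMem _ (fun h => haA (hC h))]
      intro u hu v hv
      rcases mem_insert.mp hu with rfl | hu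
      · exact (mem_filter.mp (hB' hv)).2
      · exact hanti u hu v hv

lemma exists_fin_embedding_mem {n : ℕ} {A : Finset V} (h : n ≤ #A) :
    ∃ a : Fin n ↪ V, ∀ i, a i ∈ A :=
  ⟨(Fin.castLEEmb h).trans (A.equivFin.symm.toEmbedding.trans (Function.Embedding.subtype _)),
    fun _ => (A.equivFin.symm _).2⟩

theorem Free.card_lt_of_complete {s : ℕ} (hG : Free G (completeBipartiteGraph (Fin s) (Fin s)))
    {A B : Finset V} (hA : G.IsIndepSet (A : Set V)) (hB : G.IsIndepSet (B : Set V))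
    (hcomp : ∀ u ∈ A, ∀ v ∈ B, G.Adj u v) (hBs : s ≤ #B) : #A < s := by
  by_contra! hAs
  obtain ⟨a, ha⟩ := exists_fin_embedding_mem hAs
  obtain ⟨b, hb⟩ := exists_fin_embedding_mem hBs
  have hab : ∀ i j, a i ≠ b j := fun i j h => G.irrefl (h ▸ hcomp _ (ha i) _ (hb j))
  refine hG.false ⟨⟨Sum.elim a b, a.injective.sumElim b.injective hab⟩, ?_⟩
  rintro (i | i) (j | j)
  · simpa using anticomp_self_iff.mpr hA _ (ha i) _ (ha j)
  · simpa using hcomp _ (ha i) _ (hb j)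
  · simpa using (hcomp _ (ha j) _ (hb i)).symm
  · simpa using anticomp_self_iff.mpr hB _ (hb i) _ (hb j)

-- `s + τ` vertices of `A` each halve `B`, and at least `s + τ` vertices of `B` must survive.
def anticompBound (s τ : ℕ) : ℕ := (s + τ) * 2 ^ (s + τ)

lemma add_le_anticompBound (s τ : ℕ) : s + τ ≤ anticompBound s τ :=
  Nat.le_mul_of_pos_right _ (Nat.two_pow_pos _)

theorem Free.exists_anticomp_subsets {s : ℕ}
    (hG : Free G (completeBipartiteGraph (Fin s) (Fin s))) (τ : ℕ) {A B : Finset V}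
    (hA : G.IsIndepSet (A : Set V)) (hB : G.IsIndepSet (B : Set V))
    (hAc : anticompBound s τ ≤ #A) (hBc : anticompBound s τ ≤ #B) :
    ∃ A' ⊆ A, ∃ B' ⊆ B, τ ≤ #A' ∧ τ ≤ #B' ∧ Anticomp G A' B' := by
  classical
  obtain ⟨A₀, hA₀, hA₀c⟩ := exists_subset_card_eq ((add_le_anticompBound s τ).trans hAc)
  obtain ⟨C, hC, B', hB', hn, hcomp, hanti⟩ :=
    exists_subset_complete_anticomp G (s + τ) A₀ (B := B) (by rwa [hA₀c])
  have hCs : #C < s := hG.card_lt_of_complete (hA.mono (coe_subset.mpr (hC.trans hA₀)))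
    (hB.mono (coe_subset.mpr hB')) hcomp (by omega)
  refine ⟨A₀ \ C, sdiff_subset.trans hA₀, B', hB', ?_, by omega, hanti⟩
  rw [card_sdiff_of_subset hC]
  omega

theorem Free.exists_anticomp_family {s : ℕ}
    (hG : Free G (completeBipartiteGraph (Fin s) (Fin s))) (g : ℕ) {ι : Type*} [DecidableEq ι]
    (I : Finset ι) (T : ι → Finset V) (hT : ∀ i ∈ I, G.IsIndepSet (T i : Set V))
    (P : Finset (ι × ι)) (hP : P ⊆ I.offDiag)
    (hcard : ∀ i ∈ I, (anticompBound s)^[#P] g ≤ #(T i)) :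
    ∃ T' : ι → Finset V, (∀ i ∈ I, T' i ⊆ T i ∧ #(T' i) = g) ∧
      ∀ q ∈ P, Anticomp G (T' q.1) (T' q.2) := by
  induction P using Finset.induction_on generalizing T with
  | empty =>
    choose! T' hT' using fun i hi => exists_subset_card_eq (hcard i hi)
    exact ⟨T', hT', by simp⟩
  | insert q P hqP ih =>
    obtain ⟨hq1, hq2, hq⟩ := mem_offDiag.mp (hP (mem_insert_self q P))
    rw [card_insert_of_notMem hqP, Function.iterate_succ_apply'] at hcard
    obtain ⟨A', hA', B', hB', hA'c, hB'c, hanti⟩ :=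
      hG.exists_anticomp_subsets _ (hT _ hq1) (hT _ hq2) (hcard _ hq1) (hcard _ hq2)
    set T₁ := Function.update (Function.update T q.1 A') q.2 B'
    have hT₁ : ∀ i, T₁ i ⊆ T i := by
      intro i
      simp only [T₁, Function.update_apply]
      split_ifs with h2 h1
      · exact h2 ▸ hB'
      · exact h1 ▸ hA'
      · exact subset_rfl
    have hT₁c : ∀ i ∈ I, (anticompBound s)^[#P] g ≤ #(T₁ i) := by
      intro i hi
      simp only [T₁, Function.update_apply]
      split_ifs with h2 h1
      · exact hB'c
      · exact hA'c
      · exact ((Nat.le_add_left _ _).trans (add_le_anticompBound _ _)).trans (hcard i hi)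
    obtain ⟨T', hT', hanti'⟩ := ih T₁ (fun i hi => (hT i hi).mono (coe_subset.mpr (hT₁ i)))
      ((subset_insert q P).trans hP) hT₁c
    refine ⟨T', fun i hi => ⟨(hT' i hi).1.trans (hT₁ i), (hT' i hi).2⟩, ?_⟩
    intro q' hq'
    rcases mem_insert.mp hq' with rfl | hq'
    · have h1 : T₁ q'.1 = A' := by simp [T₁, hq]
      have h2 : T₁ q'.2 = B' := by simp [T₁]
      exact hanti.mono (h1 ▸ (hT' _ hq1).1) (h2 ▸ (hT' _ hq2).1)
    · exact hanti' q' hq'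

theorem IsCrystalIn.mono {z1 z2 : V} {n1 n2 f g : ℕ} {Λ S : Finset V}
    {Λ1 Λ2 S1 S2 : V → Finset V} (hc : IsCrystalIn G z1 z2 n1 n2 Λ Λ1 Λ2) (hS : S ⊆ Λ)
    (hSc : #S = f) (h1 : ∀ z ∈ S, S1 z ⊆ Λ1 z ∧ #(S1 z) = g)
    (h2 : ∀ z ∈ S, S2 z ⊆ Λ2 z ∧ #(S2 z) = g) : IsCrystalIn G z1 z2 f g S S1 S2 where
  adj := hc.adj
  cardS := hSc
  z1_not_mem h := hc.z1_not_mem (hS h)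
  z2_not_mem h := hc.z2_not_mem (hS h)
  card1 z hz := (h1 z hz).2
  card2 z hz := (h2 z hz).2
  avoid1 z hz x hx :=
    have := hc.avoid1 z (hS hz) x ((h1 z hz).1 hx); ⟨fun h => this.1 (hS h), this.2⟩
  avoid2 z hz x hx :=
    have := hc.avoid2 z (hS hz) x ((h2 z hz).1 hx); ⟨fun h => this.1 (hS h), this.2⟩
  disj11 z hz z' hz' hne :=
    disjoint_of_subset_left (h1 z hz).1 <| disjoint_of_subset_right (h1 z' hz').1 <|
      hc.disj11 z (hS hz) z' (hS hz') hne
  disj22 z hz z' hz' hne :=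
    disjoint_of_subset_left (h2 z hz).1 <| disjoint_of_subset_right (h2 z' hz').1 <|
      hc.disj22 z (hS hz) z' (hS hz') hne
  disj12 z hz z' hz' :=
    disjoint_of_subset_left (h1 z hz).1 <| disjoint_of_subset_right (h2 z' hz').1 <|
      hc.disj12 z (hS hz) z' (hS hz')
  adj1 z hz x hx := hc.adj1 z (hS hz) x ((h1 z hz).1 hx)
  adj2 z hz x hx := hc.adj2 z (hS hz) x ((h2 z hz).1 hx)

theorem clearCrystal_of_sumElim {S : Finset V} {T : V ⊕ V → Finset V}
    (hS : G.IsIndepSet (S : Set V)) (hT : ∀ i ∈ S.disjSum S, G.IsIndepSet (T i : Set V))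
    (hanti : ∀ q ∈ (S.disjSum S).offDiag, Anticomp G (T q.1) (T q.2)) :
    ClearCrystal G S (T ∘ Sum.inl) (T ∘ Sum.inr) := by
  have hanti' (i j : V ⊕ V) (hi : i ∈ S.disjSum S) (hj : j ∈ S.disjSum S) (hij : i ≠ j) :=
    hanti (i, j) (mem_offDiag.mpr ⟨hi, hj, hij⟩)
  refine ⟨anticomp_self_iff.mpr hS, fun z hz => ⟨?_, ?_⟩, fun z hz z' hz' hne => ⟨?_, ?_⟩,
    fun z hz z' hz' => ?_⟩
  · exact anticomp_self_iff.mpr (hT (.inl z) (by simpa))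
  · exact anticomp_self_iff.mpr (hT (.inr z) (by simpa))
  · exact hanti' (.inl z) (.inl z') (by simpa) (by simpa) (by simpa)
  · exact hanti' (.inr z) (.inr z') (by simpa) (by simpa) (by simpa)
  · exact hanti' (.inl z) (.inr z') (by simpa) (by simpa) (by simp)

theorem stmt2_general (f g s t : ℕ) :
    ∃ n1 n2 : ℕ, 1 ≤ n1 ∧ 1 ≤ n2 ∧ ∀ {V : Type} (G : SimpleGraph V),
      Free G (completeBipartiteGraph (Fin s) (Fin s)) →
      Free G (⊤ : SimpleGraph (Fin t)) →
      ∀ z1 z2 : V, G.Adj z1 z2 →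
      (∃ Λ Λ1 Λ2, IsCrystalIn G z1 z2 n1 n2 Λ Λ1 Λ2) →
      ∃ S S1 S2, IsCrystalIn G z1 z2 f g S S1 S2 ∧ ClearCrystal G S S1 S2 := by
  classical
  -- one cleaning step for each ordered pair of distinct sides among the `2f`
  set N := (anticompBound s)^[(f + f) * (f + f) - (f + f)] g
  refine ⟨2 ^ (t + f), 2 ^ (t + N), Nat.one_le_two_pow, Nat.one_le_two_pow, ?_⟩
  rintro V G hKss hKt z1 z2 - ⟨Λ, Λ1, Λ2, hc⟩
  have hG := cliqueFree_of_free_top hKt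
  obtain ⟨S, hSΛ, hSc, hSind⟩ := hG.exists_isIndepSet_card hc.cardS.ge
  have hside : ∀ i ∈ S.disjSum S, #(Sum.elim Λ1 Λ2 i) = 2 ^ (t + N) := by
    rintro (z | z) hz
    · exact hc.card1 z (hSΛ (by simpa using hz))
    · exact hc.card2 z (hSΛ (by simpa using hz))
  choose! D hDΛ hDc hDind using fun i hi => hG.exists_isIndepSet_card (hside i hi).ge
  obtain ⟨T, hT, hanti⟩ := hKss.exists_anticomp_family g (S.disjSum S) D hDind _ subset_rfl
    (by rw [offDiag_card, card_disjSum, hSc]; exact fun i hi => (hDc i hi).ge)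
  have hTΛ : ∀ i ∈ S.disjSum S, T i ⊆ Sum.elim Λ1 Λ2 i ∧ #(T i) = g :=
    fun i hi => ⟨(hT i hi).1.trans (hDΛ i hi), (hT i hi).2⟩
  refine ⟨S, T ∘ Sum.inl, T ∘ Sum.inr,
    hc.mono hSΛ hSc (fun z hz => hTΛ _ (by simpa)) (fun z hz => hTΛ _ (by simpa)),
    clearCrystal_of_sumElim hSind (fun i hi => (hDind i hi).mono (coe_subset.mpr (hT i hi).1))
      hanti⟩

/-- For all `f, g, s, t ≥ 1` there are `n1, n2 ≥ 1` such that in any `(K_{s,s}, K_t)`-free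
graph, the presence of a `(z1, z2, n1, n2)`-crystal yields a clear `(z1, z2, f, g)`-crystal. -/
theorem stmt2 (f g s t : ℕ) (hf : 1 ≤ f) (hg : 1 ≤ g) (hs : 1 ≤ s) (ht : 1 ≤ t) :
    ∃ n1 n2 : ℕ, 1 ≤ n1 ∧ 1 ≤ n2 ∧ ∀ {V : Type} (G : SimpleGraph V),
      Free G (completeBipartiteGraph (Fin s) (Fin s)) →
      Free G (⊤ : SimpleGraph (Fin t)) →
      ∀ z1 z2 : V, G.Adj z1 z2 →
      (∃ Λ Λ1 Λ2, IsCrystalIn G z1 z2 n1 n2 Λ Λ1 Λ2) →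
      ∃ S S1 S2, IsCrystalIn G z1 z2 f g S S1 S2 ∧ ClearCrystal G S S1 S2 :=
  stmt2_general f g s t
end

section
/- Let f,g,h,t≥1 be integers, let G be a (K_{2,2},K_t)-free graph, let Z⊆V(G) with |Z|≤h, and let Z0={z1,z2,z}⊆Z be a 3-clique such that the neighbors of z inside Z are exactly z1 and z2. Let p=(Z0,…,Z_f;Γ_i : i∈[f]) be a (Z0, f+g+2^h·t, f)-phantom in G such that Z_f∩Z=Z0. Then either (a) there exists a (z1,z2,1,g)-crystal c in the induced subgraph G[Z_f] such that V(c) is anticomplete to Z∖Z0, or (b) G has a subgraph (not necessarily induced) isomorphic to cone(cone(T_{f,f})). -/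
/-- `(Z, Γ)` is a `(Z0, d, r)`-phantom in `G`:  `Z0 = Z 0 ⊆ Z 1 ⊆ ⋯ ⊆ Z r`, and for each
`i ∈ [r]` and each edge `uv` of `G[Z (i-1)]`, `Γ i s(u,v)` is a `d`-element subset of
`Z i \ Z (i-1)` complete to `{u, v}`, these sets being pairwise disjoint over distinct edges. -/
def IsPhantom {V : Type} (G : SimpleGraph V) (Z0 : Set V) (d r : ℕ)
    (Z : ℕ → Set V) (Γ : ℕ → Sym2 V → Set V) : Prop :=
  Z 0 = Z0 ∧
  (∀ i, i < r → Z i ⊆ Z (i + 1)) ∧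
  (∀ i, i < r → ∀ u v : V, G.Adj u v → u ∈ Z i → v ∈ Z i →
    (Γ (i + 1) s(u, v)).Finite ∧ (Γ (i + 1) s(u, v)).ncard = d ∧
    Γ (i + 1) s(u, v) ⊆ Z (i + 1) \ Z i ∧
    ∀ x ∈ Γ (i + 1) s(u, v), G.Adj u x ∧ G.Adj v x) ∧
  (∀ i, i < r → ∀ u v u' v' : V, G.Adj u v → u ∈ Z i → v ∈ Z i →
    G.Adj u' v' → u' ∈ Z i → v' ∈ Z i → s(u, v) ≠ s(u', v') →
    Γ (i + 1) s(u, v) ∩ Γ (i + 1) s(u', v') = ∅)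
/-- Vertices of the tree `T_{d,r}`: sequences over `Fin d` of length at most `r`. -/
abbrev TdrVert (d r : ℕ) : Type := {l : List (Fin d) // l.length ≤ r}

/-- The tree `T_{d,r}` of radius `r` whose root (the empty list) has degree `d` and in which
every vertex that is neither the root nor a leaf has degree `d+1`. -/
def Tdr (d r : ℕ) : SimpleGraph (TdrVert d r) :=
  SimpleGraph.fromRel
    (fun u v => ∃ a : Fin d, (v : List (Fin d)) = a :: (u : List (Fin d)))

open Finset

namespace Free

variable {V : Type} {G : SimpleGraph V}

theorem cliqueFree {t : ℕ} (hKt : Free G (⊤ : SimpleGraph (Fin t))) : G.CliqueFree t := by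
  by_contra h
  exact hKt.false (SimpleGraph.topEmbeddingOfNotCliqueFree h)

theorem card_lt_of_isClique {t : ℕ} (hKt : Free G (⊤ : SimpleGraph (Fin t))) {s : Finset V}
    (hs : G.IsClique (s : Set V)) : #s < t := by
  by_contra! hts
  obtain ⟨u, hus, hu⟩ := exists_subset_card_eq hts
  exact hKt.cliqueFree u ⟨hs.subset (by simpa using hus), hu⟩

theorem isClique_commonNeighbors (hK22 : Free G (completeBipartiteGraph (Fin 2) (Fin 2)))
    {a b : V} (hab : a ≠ b) (hnab : ¬G.Adj a b) : G.IsClique (G.commonNeighbors a b) := by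
  intro c hc d hd hcd
  rw [SimpleGraph.mem_commonNeighbors] at hc hd
  by_contra hncd
  apply hK22.false
  refine ⟨⟨Sum.elim ![a, b] ![c, d], ?_⟩, ?_⟩
  · rintro (x | x) (y | y) h <;> fin_cases x <;> fin_cases y <;>
      simp_all [G.ne_of_adj hc.1, G.ne_of_adj hc.2, G.ne_of_adj hd.1, G.ne_of_adj hd.2]
  · intro x y
    change G.Adj (Sum.elim ![a, b] ![c, d] x) (Sum.elim ![a, b] ![c, d] y) ↔ _
    rcases x with x | x <;> rcases y with y | y <;> fin_cases x <;> fin_cases y <;>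
      simp [completeBipartiteGraph, G.adj_comm, *]

theorem card_le_of_forall_exists_adj {t : ℕ}
    (hK22 : Free G (completeBipartiteGraph (Fin 2) (Fin 2)))
    (hKt : Free G (⊤ : SimpleGraph (Fin t))) {w : V} {Y B : Finset V}
    (hY : ∀ y ∈ Y, w ≠ y ∧ ¬G.Adj w y) (hBw : ∀ x ∈ B, G.Adj w x)
    (hBY : ∀ x ∈ B, ∃ y ∈ Y, G.Adj y x) : #B ≤ #Y * t := by
  classical
  calc #B ≤ #(Y.biUnion fun y => B.filter (G.Adj y ·)) := by
        refine card_le_card fun x hx => ?_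
        obtain ⟨y, hy, hyx⟩ := hBY x hx
        exact mem_biUnion.mpr ⟨y, hy, mem_filter.mpr ⟨hx, hyx⟩⟩
    _ ≤ ∑ y ∈ Y, #(B.filter (G.Adj y ·)) := card_biUnion_le
    _ ≤ #Y * t := by
        rw [← smul_eq_mul]
        refine sum_le_card_nsmul _ _ _ fun y hy => (hKt.card_lt_of_isClique ?_).le
        refine (isClique_commonNeighbors hK22 (hY y hy).1 (hY y hy).2).subset fun x hx => ?_
        rw [coe_filter] at hx
        exact G.mem_commonNeighbors.mpr ⟨hBw x hx.1, hx.2⟩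

end Free

section Cone

variable {V W : Type} {G : SimpleGraph V} {F : SimpleGraph W}

def coneHom (φ : F →g G) (c : V) (hc : ∀ v, G.Adj c (φ v)) : cone F →g G where
  toFun o := o.elim c φ
  map_rel' {u v} huv := by
    have key : ∀ u v : Option W, u ≠ v →
        (u = none ∨ ∃ a b, u = some a ∧ v = some b ∧ F.Adj a b) →
        G.Adj (u.elim c φ) (v.elim c φ) := by
      rintro u (_ | b) hne (rfl | ⟨a, b, rfl, ⟨⟩, hab⟩)
      · exact absurd rfl hne
      · exact hc b
      · exact φ.map_adj hab
    rw [cone, SimpleGraph.fromRel_adj] at huv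
    obtain ⟨hne, h | h⟩ := huv
    · exact key u v hne h
    · exact (key v u hne.symm h).symm

theorem coneHom_injective {φ : F →g G} (hφ : Function.Injective φ) {c : V}
    (hc : ∀ v, G.Adj c (φ v)) : Function.Injective (coneHom φ c hc) := by
  rintro (_ | a) (_ | b) h
  · rfl
  · exact absurd h (hc b).ne
  · exact absurd h.symm (hc a).ne
  · exact congrArg some (hφ h)

end Cone

section Tree

variable {V : Type} {G : SimpleGraph V} {d r : ℕ} {P : ℕ → V → Prop}
  {N : ℕ → V → Set V} {root : V} {child : ℕ → V → Fin d → V}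

/-- As in `Tdr`, the word `a :: l` is the child of `l` along `a`: words grow at the head. -/
def descend (root : V) (child : ℕ → V → Fin d → V) : List (Fin d) → V
  | [] => root
  | a :: l => child l.length (descend root child l) a

theorem descend_mem (hroot : P 0 root)
    (hchild : ∀ i < r, ∀ w, P i w → ∀ a, P (i + 1) (child i w a)) :
    ∀ l : List (Fin d), l.length ≤ r → P l.length (descend root child l)
  | [], _ => hroot
  | a :: l, hl => hchild _ hl _ (descend_mem hroot hchild l (by simp at hl; omega)) a

theorem descend_injOn (hroot : P 0 root)
    (hchild : ∀ i < r, ∀ w, P i w → ∀ a, P (i + 1) (child i w a))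
    (hP : ∀ i j w, P i w → P j w → i = j)
    (hN : ∀ i < r, ∀ w w', P i w → P i w' → w ≠ w' → Disjoint (N i w) (N i w'))
    (hchildN : ∀ i < r, ∀ w, P i w → ∀ a, child i w a ∈ N i w)
    (hinj : ∀ i < r, ∀ w, P i w → Function.Injective (child i w)) :
    Set.InjOn (descend root child) {l | l.length ≤ r} := by
  have hmem := descend_mem hroot hchild
  intro l (hl : l.length ≤ r) l' (hl' : l'.length ≤ r) he
  induction l generalizing l' with
  | nil =>
    rcases l' with _ | ⟨a', l'⟩
    · rfl
    · exact absurd (hP _ _ _ hroot (he ▸ hmem _ hl')) (by simp)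
  | cons a l ih =>
    rcases l' with _ | ⟨a', l'⟩
    · exact absurd (hP _ _ _ hroot (he.symm ▸ hmem _ hl)) (by simp)
    have hlen : (a :: l).length = (a' :: l').length :=
      hP _ _ _ (hmem _ hl) (he ▸ hmem _ hl')
    simp only [List.length_cons, add_left_inj, Nat.add_one_le_iff] at hlen hl hl' ⊢
    simp only [descend] at he
    have hparent : descend root child l = descend root child l' := by
      by_contra hne
      refine (hN _ hl _ _ (hmem l hl.le) (hlen ▸ hmem l' hl'.le) hne).ne_of_mem
        (hchildN _ hl _ (hmem l hl.le) a) ?_ rfl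
      rw [he, hlen]
      exact hchildN _ hl' _ (hmem l' hl'.le) a'
    obtain rfl := ih hl.le hl'.le hparent
    rw [hinj _ hl _ (hmem l hl.le) he]

/-- `P i` holds for the vertices allowed at depth `i`, and `N i w` is a reservoir for the children
of `w` that is private to `w` among the vertices of depth `i`. -/
theorem exists_injective_hom_Tdr (hroot : P 0 root)
    (hP : ∀ i j w, P i w → P j w → i = j)
    (hN : ∀ i < r, ∀ w w', P i w → P i w' → w ≠ w' → Disjoint (N i w) (N i w'))
    (hstep : ∀ i < r, ∀ w, P i w →
      ∃ C : Finset V, #C = d ∧ ∀ x ∈ C, P (i + 1) x ∧ x ∈ N i w ∧ G.Adj w x) :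
    ∃ φ : Tdr d r →g G, Function.Injective φ ∧ ∀ v, P v.1.length (φ v) := by
  have hchoice : ∀ i w, ∃ c : Fin d → V, i < r → P i w → Function.Injective c ∧
      ∀ a, P (i + 1) (c a) ∧ c a ∈ N i w ∧ G.Adj w (c a) := by
    intro i w
    by_cases h : i < r ∧ P i w
    · obtain ⟨C, hC, hCx⟩ := hstep i h.1 w h.2
      let e := (C.equivFinOfCardEq hC).symm
      exact ⟨fun a => e a, fun _ _ =>
        ⟨Subtype.val_injective.comp e.injective, fun a => hCx _ (e a).2⟩⟩
    · exact ⟨fun _ => root, fun hi hw => absurd ⟨hi, hw⟩ h⟩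
  choose child hchild using hchoice
  have hchildP : ∀ i < r, ∀ w, P i w → ∀ a, P (i + 1) (child i w a) :=
    fun i hi w hw a => ((hchild i w hi hw).2 a).1
  have hmem := descend_mem hroot hchildP
  have hedge : ∀ (a : Fin d) (l : List (Fin d)), l.length < r →
      G.Adj (descend root child l) (descend root child (a :: l)) :=
    fun a l hl => ((hchild _ _ hl (hmem l hl.le)).2 a).2.2
  refine ⟨⟨fun v => descend root child v.1, ?_⟩, fun v v' he => Subtype.ext ?_,
    fun v => hmem v.1 v.2⟩
  · intro u v huv
    rw [Tdr, SimpleGraph.fromRel_adj] at huv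
    obtain ⟨-, ⟨a, ha⟩ | ⟨a, ha⟩⟩ := huv
    · have hu : u.1.length < r := by simpa [ha] using v.2
      simpa [ha] using hedge a u.1 hu
    · have hv : v.1.length < r := by simpa [ha] using u.2
      simpa [ha] using (hedge a v.1 hv).symm
  · exact descend_injOn hroot hchildP hP hN
      (fun i hi w hw a => ((hchild i w hi hw).2 a).2.1)
      (fun i hi w hw => (hchild i w hi hw).1) v.2 v'.2 he

end Tree

theorem ne_of_ncard_eq_three {V : Type} {a b c : V} (h : ({a, b, c} : Set V).ncard = 3) :
    a ≠ b ∧ a ≠ c ∧ b ≠ c := by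
  have hpair : ∀ x y : V, ({x, y} : Set V).ncard ≤ 2 := fun x y => by
    simpa using Set.ncard_insert_le x {y}
  refine ⟨?_, ?_, ?_⟩ <;> rintro rfl
  · have := hpair a c
    simp_all
  · have := hpair b a
    simp_all [Set.insert_comm a b]
  · have := hpair a b
    simp_all

namespace IsPhantom

variable {V : Type} {G : SimpleGraph V} {Z0 : Set V} {d r : ℕ} {Zs : ℕ → Set V}
  {Γ : ℕ → Sym2 V → Set V}

theorem mono (hp : IsPhantom G Z0 d r Zs Γ) {i j : ℕ} (hij : i ≤ j) (hj : j ≤ r) :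
    Zs i ⊆ Zs j := by
  induction j, hij using Nat.le_induction with
  | base => exact subset_rfl
  | succ j _ ih => exact (ih (by omega)).trans (hp.2.1 j (by omega))

theorem base_subset (hp : IsPhantom G Z0 d r Zs Γ) {i : ℕ} (hi : i ≤ r) : Z0 ⊆ Zs i :=
  hp.1 ▸ hp.mono (Nat.zero_le i) hi

theorem disjoint (hp : IsPhantom G Z0 d r Zs Γ) {i : ℕ} (hi : i < r) {u v u' v' : V}
    (huv : G.Adj u v) (hu : u ∈ Zs i) (hv : v ∈ Zs i) (huv' : G.Adj u' v') (hu' : u' ∈ Zs i)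
    (hv' : v' ∈ Zs i) (hne : s(u, v) ≠ s(u', v')) :
    Disjoint (Γ (i + 1) s(u, v)) (Γ (i + 1) s(u', v')) :=
  Set.disjoint_iff_inter_eq_empty.mpr (hp.2.2.2 i hi u v u' v' huv hu hv huv' hu' hv' hne)

end IsPhantom

section Crystal

variable {V : Type} {G : SimpleGraph V} {z1 z2 w : V} {g : ℕ} {T1 T2 : Finset V}

theorem crystalVerts_singleton (w : V) (T1 T2 : Finset V) :
    crystalVerts {w} (fun _ => T1) (fun _ => T2) = insert w ((T1 : Set V) ∪ T2) := by
  ext x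
  simp [crystalVerts, or_assoc]

theorem isCrystalIn_singleton (h12 : G.Adj z1 z2) (hw1 : w ≠ z1) (hw2 : w ≠ z2)
    (hT1 : #T1 = g) (hT2 : #T2 = g) (hT : Disjoint T1 T2)
    (hT1adj : ∀ x ∈ T1, x ≠ z2 ∧ G.Adj x z1 ∧ G.Adj x w ∧ ¬G.Adj x z2)
    (hT2adj : ∀ x ∈ T2, x ≠ z1 ∧ G.Adj x z2 ∧ G.Adj x w ∧ ¬G.Adj x z1) :
    IsCrystalIn G z1 z2 1 g {w} (fun _ => T1) (fun _ => T2) where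
  adj := h12
  cardS := card_singleton w
  z1_not_mem := by simpa using hw1.symm
  z2_not_mem := by simpa using hw2.symm
  card1 _ _ := hT1
  card2 _ _ := hT2
  avoid1 _ _ x hx :=
    ⟨by simpa using (hT1adj x hx).2.2.1.ne, (hT1adj x hx).2.1.ne, (hT1adj x hx).1⟩
  avoid2 _ _ x hx :=
    ⟨by simpa using (hT2adj x hx).2.2.1.ne, (hT2adj x hx).1, (hT2adj x hx).2.1.ne⟩
  disj11 _ hz _ hz' hne := absurd ((mem_singleton.mp hz).trans (mem_singleton.mp hz').symm) hne
  disj22 _ hz _ hz' hne := absurd ((mem_singleton.mp hz).trans (mem_singleton.mp hz').symm) hne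
  disj12 _ _ _ _ := hT
  adj1 _ hz x hx := mem_singleton.mp hz ▸ (hT1adj x hx).2
  adj2 _ hz x hx := mem_singleton.mp hz ▸ (hT2adj x hx).2

end Crystal

/-- The vertices that may sit at depth `i` of the tree grown from `z` through the levels `Zs`. -/
structure IsTreeCandidate {V : Type} (G : SimpleGraph V) (Z : Set V) (z1 z2 z : V)
    (Zs : ℕ → Set V) (i : ℕ) (w : V) : Prop where
  mem : w ∈ Zs i
  not_mem_of_lt : ∀ j < i, w ∉ Zs j
  adj_left : G.Adj z1 w
  adj_right : G.Adj z2 w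
  eq_or_not_mem : w = z ∨ w ∉ Z
  anticomplete : ∀ y ∈ Z \ {z1, z2, z}, ¬G.Adj w y

namespace IsTreeCandidate

variable {V : Type} {G : SimpleGraph V} {Z : Set V} {z1 z2 z : V} {Zs : ℕ → Set V}
  {Γ : ℕ → Sym2 V → Set V} {d r i j : ℕ} {w w' : V}

theorem root (h0 : z ∈ Zs 0) (h1 : G.Adj z1 z) (h2 : G.Adj z2 z)
    (hNz : ∀ y ∈ Z, G.Adj z y ↔ y = z1 ∨ y = z2) : IsTreeCandidate G Z z1 z2 z Zs 0 z where
  mem := h0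
  not_mem_of_lt _ hj := absurd hj (Nat.not_lt_zero _)
  adj_left := h1
  adj_right := h2
  eq_or_not_mem := Or.inl rfl
  anticomplete y hy hzy := hy.2 (by rcases (hNz y hy.1).mp hzy with rfl | rfl <;> simp)

theorem depth_eq (hw : IsTreeCandidate G Z z1 z2 z Zs i w)
    (hw' : IsTreeCandidate G Z z1 z2 z Zs j w) : i = j := by
  by_contra hne
  rcases Nat.lt_or_gt_of_ne hne with hij | hij
  · exact hw'.not_mem_of_lt i hij hw.mem
  · exact hw.not_mem_of_lt j hij hw'.mem

theorem disjoint_Γ (hp : IsPhantom G {z1, z2, z} d r Zs Γ) (hi : i < r)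
    (hw : IsTreeCandidate G Z z1 z2 z Zs i w) (hw' : IsTreeCandidate G Z z1 z2 z Zs i w')
    (hne : w ≠ w') :
    Disjoint (Γ (i + 1) s(z1, w) ∪ Γ (i + 1) s(z2, w))
      (Γ (i + 1) s(z1, w') ∪ Γ (i + 1) s(z2, w')) := by
  have hZ0 := hp.base_subset hi.le
  have key : ∀ a b, (a = z1 ∨ a = z2) → (b = z1 ∨ b = z2) → G.Adj a w → G.Adj b w' →
      Disjoint (Γ (i + 1) s(a, w)) (Γ (i + 1) s(b, w')) := by
    intro a b ha hb haw hbw'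
    refine hp.disjoint hi haw (hZ0 (by rcases ha with rfl | rfl <;> simp)) hw.mem hbw'
      (hZ0 (by rcases hb with rfl | rfl <;> simp)) hw'.mem ?_
    rw [Ne, Sym2.eq_iff]
    rintro (⟨-, h⟩ | ⟨-, rfl⟩)
    · exact hne h
    · rcases hb with rfl | rfl
      · exact hw.adj_left.ne rfl
      · exact hw.adj_right.ne rfl
  exact Set.disjoint_union_left.mpr
    ⟨Set.disjoint_union_right.mpr ⟨key _ _ (.inl rfl) (.inl rfl) hw.adj_left hw'.adj_left,
      key _ _ (.inl rfl) (.inr rfl) hw.adj_left hw'.adj_right⟩,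
    Set.disjoint_union_right.mpr ⟨key _ _ (.inr rfl) (.inl rfl) hw.adj_right hw'.adj_left,
      key _ _ (.inr rfl) (.inr rfl) hw.adj_right hw'.adj_right⟩⟩

theorem of_mem_Γ {f : ℕ} (hp : IsPhantom G {z1, z2, z} d f Zs Γ)
    (hcap : Zs f ∩ Z = {z1, z2, z}) (hi : i < f) {u v x : V} (huv : G.Adj u v) (hu : u ∈ Zs i)
    (hv : v ∈ Zs i) (hx : x ∈ Γ (i + 1) s(u, v)) (h1 : G.Adj z1 x) (h2 : G.Adj z2 x)
    (hanti : ∀ y ∈ Z \ {z1, z2, z}, ¬G.Adj x y) :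
    IsTreeCandidate G Z z1 z2 z Zs (i + 1) x := by
  obtain ⟨hxi1, hxi⟩ := (hp.2.2.1 i hi u v huv hu hv).2.2.1 hx
  exact {
    mem := hxi1
    not_mem_of_lt := fun j hj hxj => hxi (hp.mono (by omega) hi.le hxj)
    adj_left := h1
    adj_right := h2
    eq_or_not_mem := Or.inr fun hxZ =>
      hxi (hp.base_subset hi.le (hcap ▸ ⟨hp.mono hi le_rfl hxi1, hxZ⟩))
    anticomplete := hanti }

end IsTreeCandidate

section Step

variable {V : Type} {G : SimpleGraph V} {Z : Set V} {z1 z2 z : V} {Zs : ℕ → Set V}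
  {Γ : ℕ → Sym2 V → Set V} {f g h t i : ℕ} {w : V}

theorem exists_large_anticomplete_subset_Γ
    (hp : IsPhantom G {z1, z2, z} (f + g + 2 ^ h * t) f Zs Γ)
    (hK22 : Free G (completeBipartiteGraph (Fin 2) (Fin 2)))
    (hKt : Free G (⊤ : SimpleGraph (Fin t))) (hZfin : Z.Finite) (hZcard : Z.ncard ≤ h)
    (hw : IsTreeCandidate G Z z1 z2 z Zs i w) (hi : i < f) {a : V} (ha : a ∈ Zs i)
    (haw : G.Adj a w) :
    ∃ D : Finset V, f + g ≤ #D ∧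
      ∀ x ∈ D, x ∈ Γ (i + 1) s(a, w) ∧ ∀ y ∈ Z \ {z1, z2, z}, ¬G.Adj x y := by
  classical
  obtain ⟨hfin, hcard, -, hadj⟩ := hp.2.2.1 i hi a w haw ha hw.mem
  set Y := hZfin.toFinset \ {z1, z2, z}
  set C := hfin.toFinset
  set B := C.filter fun x => ∃ y ∈ Y, G.Adj y x
  have hC : #C = f + g + 2 ^ h * t := by rw [← hcard, Set.ncard_eq_toFinset_card _ hfin]
  have hY : #Y ≤ h :=
    (card_le_card sdiff_subset).trans (by rwa [← Set.ncard_eq_toFinset_card _ hZfin])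
  have hB : #B ≤ #Y * t := by
    refine hK22.card_le_of_forall_exists_adj hKt (w := w) (fun y hy => ?_)
      (fun x hx => (hadj x (by simpa [C] using (mem_filter.mp hx).1)).2)
      (fun x hx => (mem_filter.mp hx).2)
    have hy' : y ∈ Z \ {z1, z2, z} := by simpa [Y] using hy
    refine ⟨?_, hw.anticomplete y hy'⟩
    rintro rfl
    rcases hw.eq_or_not_mem with rfl | hwZ
    · exact hy'.2 (by simp)
    · exact hwZ hy'.1
  have hYt : #Y * t ≤ 2 ^ h * t := Nat.mul_le_mul_right t (hY.trans Nat.lt_two_pow_self.le)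
  refine ⟨C \ B, ?_, fun x hx => ?_⟩
  · have hBC : B ⊆ C := filter_subset _ _
    rw [card_sdiff_of_subset hBC]
    omega
  · obtain ⟨hxC, hxB⟩ := mem_sdiff.mp hx
    refine ⟨by simpa [C] using hxC,
      fun y hy hxy => hxB (mem_filter.mpr ⟨hxC, y, ?_, hxy.symm⟩)⟩
    simpa [Y] using hy

theorem exists_crystal_of_two_sides {d : ℕ} (hp : IsPhantom G {z1, z2, z} d f Zs Γ)
    (hi : i < f) (hw : IsTreeCandidate G Z z1 z2 z Zs i w) (h12 : G.Adj z1 z2)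
    {T1 T2 : Finset V} (hT1 : #T1 = g) (hT2 : #T2 = g)
    (hT1x : ∀ x ∈ T1, x ∈ Γ (i + 1) s(z1, w) ∧ ¬G.Adj z2 x ∧
      ∀ y ∈ Z \ {z1, z2, z}, ¬G.Adj x y)
    (hT2x : ∀ x ∈ T2, x ∈ Γ (i + 1) s(z2, w) ∧ ¬G.Adj z1 x ∧
      ∀ y ∈ Z \ {z1, z2, z}, ¬G.Adj x y) :
    ∃ (S : Finset V) (S1 S2 : V → Finset V),
      IsCrystalIn G z1 z2 1 g S S1 S2 ∧ crystalVerts S S1 S2 ⊆ Zs f ∧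
      ∀ u ∈ crystalVerts S S1 S2, ∀ v ∈ Z \ {z1, z2, z}, ¬G.Adj u v := by
  have hZ0 := hp.base_subset hi.le
  have hz1 : z1 ∈ Zs i := hZ0 (by simp)
  have hz2 : z2 ∈ Zs i := hZ0 (by simp)
  have hΓ : ∀ {a}, a ∈ Zs i → G.Adj a w → ∀ x ∈ Γ (i + 1) s(a, w),
      x ∈ Zs (i + 1) ∧ x ∉ Zs i ∧ G.Adj a x ∧ G.Adj w x := fun ha haw x hx =>
    have hΓaw := hp.2.2.1 i hi _ _ haw ha hw.mem
    ⟨(hΓaw.2.2.1 hx).1, (hΓaw.2.2.1 hx).2, hΓaw.2.2.2 x hx⟩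
  have hdisj : Disjoint T1 T2 := by
    rw [← disjoint_coe]
    refine (hp.disjoint hi hw.adj_left hz1 hw.mem hw.adj_right hz2 hw.mem ?_).mono
      (fun x hx => (hT1x x hx).1) (fun x hx => (hT2x x hx).1)
    rw [Ne, Sym2.eq_iff]
    rintro (⟨h, -⟩ | ⟨h, -⟩)
    exacts [h12.ne h, hw.adj_left.ne h]
  have hcrystal : IsCrystalIn G z1 z2 1 g {w} (fun _ => T1) (fun _ => T2) := by
    refine isCrystalIn_singleton h12 hw.adj_left.ne' hw.adj_right.ne' hT1 hT2 hdisj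
      (fun x hx => ?_) (fun x hx => ?_)
    · obtain ⟨hxΓ, h2x, -⟩ := hT1x x hx
      obtain ⟨-, hxi, h1x, hwx⟩ := hΓ hz1 hw.adj_left x hxΓ
      exact ⟨fun h => hxi (h ▸ hz2), h1x.symm, hwx.symm, fun h => h2x h.symm⟩
    · obtain ⟨hxΓ, h1x, -⟩ := hT2x x hx
      obtain ⟨-, hxi, h2x, hwx⟩ := hΓ hz2 hw.adj_right x hxΓ
      exact ⟨fun h => hxi (h ▸ hz1), h2x.symm, hwx.symm, fun h => h1x h.symm⟩
  refine ⟨{w}, fun _ => T1, fun _ => T2, hcrystal, ?_, ?_⟩ <;> rw [crystalVerts_singleton]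
  · rintro u (rfl | hu | hu)
    · exact hp.mono hi.le le_rfl hw.mem
    · exact hp.mono hi le_rfl (hΓ hz1 hw.adj_left u (hT1x u hu).1).1
    · exact hp.mono hi le_rfl (hΓ hz2 hw.adj_right u (hT2x u hu).1).1
  · rintro u (rfl | hu | hu)
    · exact hw.anticomplete
    · exact (hT1x u hu).2.2
    · exact (hT2x u hu).2.2

theorem crystal_or_exists_children
    (hp : IsPhantom G {z1, z2, z} (f + g + 2 ^ h * t) f Zs Γ)
    (hcap : Zs f ∩ Z = {z1, z2, z})
    (hK22 : Free G (completeBipartiteGraph (Fin 2) (Fin 2)))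
    (hKt : Free G (⊤ : SimpleGraph (Fin t))) (hZfin : Z.Finite) (hZcard : Z.ncard ≤ h)
    (h12 : G.Adj z1 z2) (hw : IsTreeCandidate G Z z1 z2 z Zs i w) (hi : i < f) :
    (∃ (S : Finset V) (S1 S2 : V → Finset V),
      IsCrystalIn G z1 z2 1 g S S1 S2 ∧ crystalVerts S S1 S2 ⊆ Zs f ∧
      ∀ u ∈ crystalVerts S S1 S2, ∀ v ∈ Z \ {z1, z2, z}, ¬G.Adj u v) ∨
    ∃ C : Finset V, #C = f ∧ ∀ x ∈ C, IsTreeCandidate G Z z1 z2 z Zs (i + 1) x ∧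
      x ∈ Γ (i + 1) s(z1, w) ∪ Γ (i + 1) s(z2, w) ∧ G.Adj w x := by
  classical
  have hZ0 := hp.base_subset hi.le
  have hz1 : z1 ∈ Zs i := hZ0 (by simp)
  have hz2 : z2 ∈ Zs i := hZ0 (by simp)
  have hadj : ∀ {a}, a ∈ Zs i → G.Adj a w →
      ∀ x ∈ Γ (i + 1) s(a, w), G.Adj a x ∧ G.Adj w x :=
    fun ha haw => (hp.2.2.1 i hi _ _ haw ha hw.mem).2.2.2
  obtain ⟨D1, hD1, hD1x⟩ :=
    exists_large_anticomplete_subset_Γ hp hK22 hKt hZfin hZcard hw hi hz1 hw.adj_left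
  obtain ⟨D2, hD2, hD2x⟩ :=
    exists_large_anticomplete_subset_Γ hp hK22 hKt hZfin hZcard hw hi hz2 hw.adj_right
  have hsplit1 := card_filter_add_card_filter_not (s := D1) (G.Adj z2 ·)
  have hsplit2 := card_filter_add_card_filter_not (s := D2) (G.Adj z1 ·)
  by_cases hg1 : g ≤ #(D1.filter (¬G.Adj z2 ·))
  · by_cases hg2 : g ≤ #(D2.filter (¬G.Adj z1 ·))
    · left
      obtain ⟨T1, hT1D, hT1⟩ := exists_subset_card_eq hg1
      obtain ⟨T2, hT2D, hT2⟩ := exists_subset_card_eq hg2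
      refine exists_crystal_of_two_sides hp hi hw h12 hT1 hT2 (fun x hx => ?_) (fun x hx => ?_)
      · obtain ⟨hxD, h2x⟩ := mem_filter.mp (hT1D hx)
        exact ⟨(hD1x x hxD).1, h2x, (hD1x x hxD).2⟩
      · obtain ⟨hxD, h1x⟩ := mem_filter.mp (hT2D hx)
        exact ⟨(hD2x x hxD).1, h1x, (hD2x x hxD).2⟩
    · right
      obtain ⟨C, hCD, hC⟩ :=
        exists_subset_card_eq (s := D2.filter (G.Adj z1 ·)) (n := f) (by omega)
      refine ⟨C, hC, fun x hx => ?_⟩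
      obtain ⟨hxD, h1x⟩ := mem_filter.mp (hCD hx)
      obtain ⟨hxΓ, hanti⟩ := hD2x x hxD
      obtain ⟨h2x, hwx⟩ := hadj hz2 hw.adj_right x hxΓ
      exact ⟨.of_mem_Γ hp hcap hi hw.adj_right hz2 hw.mem hxΓ h1x h2x hanti, .inr hxΓ, hwx⟩
  · right
    obtain ⟨C, hCD, hC⟩ :=
      exists_subset_card_eq (s := D1.filter (G.Adj z2 ·)) (n := f) (by omega)
    refine ⟨C, hC, fun x hx => ?_⟩
    obtain ⟨hxD, h2x⟩ := mem_filter.mp (hCD hx)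
    obtain ⟨hxΓ, hanti⟩ := hD1x x hxD
    obtain ⟨h1x, hwx⟩ := hadj hz1 hw.adj_left x hxΓ
    exact ⟨.of_mem_Γ hp hcap hi hw.adj_left hz1 hw.mem hxΓ h1x h2x hanti, .inl hxΓ, hwx⟩

end Step

theorem stmt6_general (f g h t : ℕ)
    {V : Type} (G : SimpleGraph V)
    (hK22 : Free G (completeBipartiteGraph (Fin 2) (Fin 2)))
    (hKt : Free G (⊤ : SimpleGraph (Fin t)))
    (Z : Set V) (hZfin : Z.Finite) (hZcard : Z.ncard ≤ h)
    (z1 z2 z : V)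
    (hZ0clique : G.IsClique {z1, z2, z}) (hZ0card : ({z1, z2, z} : Set V).ncard = 3)
    (hNz : ∀ y ∈ Z, G.Adj z y ↔ y = z1 ∨ y = z2)
    (Zs : ℕ → Set V) (Γ : ℕ → Sym2 V → Set V)
    (hp : IsPhantom G {z1, z2, z} (f + g + 2 ^ h * t) f Zs Γ)
    (hcap : Zs f ∩ Z = {z1, z2, z}) :
    (∃ (S : Finset V) (S1 S2 : V → Finset V),
      IsCrystalIn G z1 z2 1 g S S1 S2 ∧ crystalVerts S S1 S2 ⊆ Zs f ∧
      ∀ u ∈ crystalVerts S S1 S2, ∀ v ∈ Z \ {z1, z2, z}, ¬ G.Adj u v) ∨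
    (∃ φ : cone (cone (Tdr f f)) →g G, Function.Injective φ) := by
  obtain ⟨h12, h1z, h2z⟩ := ne_of_ncard_eq_three hZ0card
  have hadj12 : G.Adj z1 z2 := hZ0clique (by simp) (by simp) h12
  refine or_iff_not_imp_left.mpr fun hcrystal => ?_
  have hroot : IsTreeCandidate G Z z1 z2 z Zs 0 z :=
    .root (hp.base_subset (Nat.zero_le f) (by simp)) (hZ0clique (by simp) (by simp) h1z)
      (hZ0clique (by simp) (by simp) h2z) hNz
  obtain ⟨φ, hφ, hφP⟩ := exists_injective_hom_Tdr (G := G) (d := f) (r := f)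
    (N := fun i w => Γ (i + 1) s(z1, w) ∪ Γ (i + 1) s(z2, w)) hroot
    (fun _ _ _ hi hj => hi.depth_eq hj)
    (fun _ hi _ _ hw hw' hne => hw.disjoint_Γ hp hi hw' hne)
    (fun _ hi _ hw => (crystal_or_exists_children hp hcap hK22 hKt hZfin hZcard hadj12 hw
      hi).resolve_left hcrystal)
  let ψ := coneHom φ z2 fun v => (hφP v).adj_right
  refine ⟨coneHom ψ z1 ?_, coneHom_injective (coneHom_injective hφ _) _⟩
  rintro (_ | v)
  exacts [hadj12, (hφP v).adj_left]

/-- Theorem: given a `(Z0, f+g+2^h·t, f)`-phantom on a suitable 3-clique `Z0 = {z1, z2, z}`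
inside a set `Z` of size at most `h` in a `(K_{2,2}, K_t)`-free graph `G` with `Z_f ∩ Z = Z0`,
either there is a `(z1, z2, 1, g)`-crystal in `G[Z_f]` anticomplete to `Z \ Z0`, or `G` has a
subgraph isomorphic to `cone(cone(T_{f,f}))`. -/
theorem stmt6 (f g h t : ℕ) (hf : 1 ≤ f) (hg : 1 ≤ g) (hh : 1 ≤ h) (ht : 1 ≤ t)
    {V : Type} (G : SimpleGraph V)
    (hK22 : Free G (completeBipartiteGraph (Fin 2) (Fin 2)))
    (hKt : Free G (⊤ : SimpleGraph (Fin t)))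
    (Z : Set V) (hZfin : Z.Finite) (hZcard : Z.ncard ≤ h)
    (z1 z2 z : V) (hZ0sub : {z1, z2, z} ⊆ Z)
    (hZ0clique : G.IsClique {z1, z2, z}) (hZ0card : ({z1, z2, z} : Set V).ncard = 3)
    (hNz : ∀ y ∈ Z, G.Adj z y ↔ y = z1 ∨ y = z2)
    (Zs : ℕ → Set V) (Γ : ℕ → Sym2 V → Set V)
    (hp : IsPhantom G {z1, z2, z} (f + g + 2 ^ h * t) f Zs Γ)
    (hcap : Zs f ∩ Z = {z1, z2, z}) :
    (∃ (S : Finset V) (S1 S2 : V → Finset V),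
      IsCrystalIn G z1 z2 1 g S S1 S2 ∧ crystalVerts S S1 S2 ⊆ Zs f ∧
      ∀ u ∈ crystalVerts S S1 S2, ∀ v ∈ Z \ {z1, z2, z}, ¬ G.Adj u v) ∨
    (∃ φ : cone (cone (Tdr f f)) →g G, Function.Injective φ) :=
  stmt6_general f g h t G hK22 hKt Z hZfin hZcard z1 z2 z hZ0clique hZ0card hNz Zs Γ hp hcap
end

section
/- Every 2-tree on at least four vertices has a crystallized vertex. -/
/-- A `k`-tree: either a complete graph on `k` vertices, or a graph on `h > k` vertices with an
ordering `v_1, …, v_h` such that for every `i ∈ {1, …, h-k}` the set of neighbors of `v_i` among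
`{v_{i+1}, …, v_h}` is a clique of cardinality `k`. -/
def IsKTree (k : ℕ) {W : Type} [Fintype W] (H : SimpleGraph W) : Prop :=
  (Fintype.card W = k ∧ H = ⊤) ∨
  (k < Fintype.card W ∧ ∃ σ : Fin (Fintype.card W) ≃ W,
    ∀ i : Fin (Fintype.card W), (i : ℕ) < Fintype.card W - k →
      H.IsClique {w : W | ∃ j, i < j ∧ σ j = w ∧ H.Adj (σ i) w} ∧
      {w : W | ∃ j, i < j ∧ σ j = w ∧ H.Adj (σ i) w}.ncard = k)

/-- A vertex `z` of `H` is crystallized: there are adjacent `z1, z2 ∈ N_H(z)` such that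
`N_H(z) \ {z1, z2}` is a non-empty stable set admitting a partition `(S1, S2)` with
`N_H(x) = {z_i, z}` for each `i` and each `x ∈ S_i`. -/
def Crystallized {W : Type} (H : SimpleGraph W) (z : W) : Prop :=
  ∃ z1 z2 : W, H.Adj z1 z2 ∧ H.Adj z z1 ∧ H.Adj z z2 ∧
    (H.neighborSet z \ {z1, z2}).Nonempty ∧
    (∀ u ∈ H.neighborSet z \ {z1, z2}, ∀ v ∈ H.neighborSet z \ {z1, z2}, ¬ H.Adj u v) ∧
    ∃ S1 S2 : Set W, S1 ∪ S2 = H.neighborSet z \ {z1, z2} ∧ Disjoint S1 S2 ∧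
      (∀ x ∈ S1, H.neighborSet x = {z1, z}) ∧
      (∀ x ∈ S2, H.neighborSet x = {z2, z})

open Set

variable {W : Type}

def CrystOn (H : SimpleGraph W) (A : Set W) (z : W) : Prop :=
  z ∈ A ∧ ∃ z1 z2 : W, z1 ∈ A ∧ z2 ∈ A ∧ H.Adj z1 z2 ∧ H.Adj z z1 ∧ H.Adj z z2 ∧
    ((H.neighborSet z ∩ A) \ {z1, z2}).Nonempty ∧
    (∀ u ∈ (H.neighborSet z ∩ A) \ {z1, z2}, ∀ w ∈ (H.neighborSet z ∩ A) \ {z1, z2},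
      ¬ H.Adj u w) ∧
    ∃ S1 S2 : Set W, S1 ∪ S2 = (H.neighborSet z ∩ A) \ {z1, z2} ∧ Disjoint S1 S2 ∧
      (∀ x ∈ S1, H.neighborSet x ∩ A = {z1, z}) ∧
      (∀ x ∈ S2, H.neighborSet x ∩ A = {z2, z})

lemma crystOn_univ {H : SimpleGraph W} {z : W} (h : CrystOn H univ z) : Crystallized H z := by
  obtain ⟨-, z1, z2, -, -, h12, h1, h2, hne, hst, S1, S2, hU, hd, hS1, hS2⟩ := h
  refine ⟨z1, z2, h12, h1, h2, by simpa using hne, by simpa using hst, S1, S2,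
    by simpa using hU, hd, fun x hx => by simpa using hS1 x hx,
    fun x hx => by simpa using hS2 x hx⟩

lemma nbhd_insert_adj {H : SimpleGraph W} {A : Set W} {v w : W} (h : H.Adj w v) :
    H.neighborSet w ∩ insert v A = insert v (H.neighborSet w ∩ A) := by
  ext u
  simp only [SimpleGraph.mem_neighborSet, Set.mem_inter_iff, Set.mem_insert_iff]
  constructor
  · rintro ⟨hu, rfl | hu2⟩
    · exact Or.inl rfl
    · exact Or.inr ⟨hu, hu2⟩
  · rintro (rfl | ⟨hu, hu2⟩)
    · exact ⟨h, Or.inl rfl⟩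
    · exact ⟨hu, Or.inr hu2⟩

lemma nbhd_insert_nonadj {H : SimpleGraph W} {A : Set W} {v w : W} (h : ¬ H.Adj w v) :
    H.neighborSet w ∩ insert v A = H.neighborSet w ∩ A := by
  ext u
  simp only [SimpleGraph.mem_neighborSet, Set.mem_inter_iff, Set.mem_insert_iff]
  constructor
  · rintro ⟨hu, rfl | hu2⟩
    · exact absurd hu h
    · exact ⟨hu, hu2⟩
  · rintro ⟨hu, hu2⟩
    exact ⟨hu, Or.inr hu2⟩

lemma nbhd_insert_self {H : SimpleGraph W} {A : Set W} {v : W} :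
    H.neighborSet v ∩ insert v A = H.neighborSet v ∩ A := by
  ext u
  simp only [SimpleGraph.mem_neighborSet, Set.mem_inter_iff, Set.mem_insert_iff]
  constructor
  · rintro ⟨hu, rfl | hu2⟩
    · exact absurd hu (H.irrefl)
    · exact ⟨hu, hu2⟩
  · rintro ⟨hu, hu2⟩
    exact ⟨hu, Or.inr hu2⟩

lemma adj_v_iff {H : SimpleGraph W} {A : Set W} {v a b x : W}
    (hNv : H.neighborSet v ∩ A = {a, b}) (hxA : x ∈ A) :
    H.Adj v x ↔ (x = a ∨ x = b) := by
  constructor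
  · intro h
    have : x ∈ H.neighborSet v ∩ A := ⟨h, hxA⟩
    rw [hNv] at this; simpa using this
  · intro h
    have : x ∈ ({a, b} : Set W) := by simpa using h
    rw [← hNv] at this; exact this.1

section Key

variable {H : SimpleGraph W} {A : Set W} {v a b z z1 z2 : W} {S1 S2 : Set W}

lemma key1a
    (hv : v ∉ A) (haA : a ∈ A) (hbA : b ∈ A) (hab : H.Adj a b)
    (hNv : H.neighborSet v ∩ A = {a, b})
    (hz1A : z1 ∈ A) (hz2A : z2 ∈ A)
    (h12 : H.Adj z1 z2) (hz1 : H.Adj a z1) (hz2 : H.Adj a z2)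
    (hstab : ∀ u ∈ (H.neighborSet a ∩ A) \ {z1, z2}, ∀ w ∈ (H.neighborSet a ∩ A) \ {z1, z2},
      ¬ H.Adj u w)
    (hS : S1 ∪ S2 = (H.neighborSet a ∩ A) \ {z1, z2})
    (hdisj : Disjoint S1 S2)
    (hS1 : ∀ x ∈ S1, H.neighborSet x ∩ A = {z1, a})
    (hS2 : ∀ x ∈ S2, H.neighborSet x ∩ A = {z2, a})
    (hb1 : b = z1) :
    ∃ z', CrystOn H (insert v A) z' := by
  subst hb1
  -- basic facts about members of S1 ∪ S2
  have hSmem : ∀ x ∈ S1 ∪ S2, H.Adj a x ∧ x ∈ A ∧ x ≠ b ∧ x ≠ z2 := by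
    intro x hx
    rw [hS] at hx
    obtain ⟨⟨h1, h2⟩, h3⟩ := hx
    simp only [Set.mem_insert_iff, Set.mem_singleton_iff, not_or] at h3
    exact ⟨h1, h2, h3.1, h3.2⟩
  have hxa : ∀ x ∈ S1 ∪ S2, x ≠ a := fun x hx => (hSmem x hx).1.ne'
  have hnov : ∀ x ∈ S1 ∪ S2, ¬ H.Adj x v := by
    intro x hx hadj
    obtain ⟨h1, h2, h3, _⟩ := hSmem x hx
    rcases (adj_v_iff hNv h2).mp hadj.symm with rfl | rfl
    · exact hxa x hx rfl
    · exact h3 rfl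
  have hva : H.Adj v a := (adj_v_iff hNv haA).mpr (Or.inl rfl)
  have hvnot1 : v ≠ b := fun h => hv (h ▸ hbA)
  have hvnot2 : v ≠ z2 := fun h => hv (h ▸ hz2A)
  have hXeq : (H.neighborSet a ∩ insert v A) \ {b, z2}
      = insert v (S1 ∪ S2) := by
    rw [nbhd_insert_adj hva.symm, Set.insert_diff_of_notMem _ (by simp [hvnot1, hvnot2]), hS]
  refine ⟨a, Or.inr haA, b, z2, Or.inr hbA, Or.inr hz2A, h12, hz1, hz2, ?_, ?_,
    insert v S1, S2, ?_, ?_, ?_, ?_⟩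
  · rw [hXeq]; exact ⟨v, Or.inl rfl⟩
  · rw [hXeq]
    rintro u (rfl | hu) w (rfl | hw)
    · exact fun h => H.irrefl h
    · exact fun h => hnov w hw h.symm
    · exact fun h => hnov u hu h
    · exact hstab u (hS ▸ hu) w (hS ▸ hw)
  · rw [Set.insert_union, hXeq]
  · rw [Set.disjoint_left] at hdisj ⊢
    rintro x (rfl | hx)
    · intro hxS2
      exact hv (hSmem x (Or.inr hxS2)).2.1
    · exact hdisj hx
  · rintro x (rfl | hx)
    · rw [nbhd_insert_self, hNv, Set.pair_comm]
    · rw [nbhd_insert_nonadj (hnov x (Or.inl hx))]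
      exact hS1 x hx
  · intro x hx
    rw [nbhd_insert_nonadj (hnov x (Or.inr hx))]
    exact hS2 x hx


lemma key1c
    (hv : v ∉ A) (haA : a ∈ A) (hbA : b ∈ A) (hab : H.Adj a b)
    (hNv : H.neighborSet v ∩ A = {a, b})
    (hz1A : z1 ∈ A)
    (hz1 : H.Adj a z1)
    (hS1 : ∀ x ∈ S1, H.neighborSet x ∩ A = {z1, a})
    (hbS : b ∈ S1) :
    ∃ z', CrystOn H (insert v A) z' := by
  have hNb : H.neighborSet b ∩ A = {z1, a} := hS1 b hbS
  have hbz1 : H.Adj b z1 := by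
    have : z1 ∈ H.neighborSet b ∩ A := by rw [hNb]; exact Or.inl rfl
    exact this.1
  have hvb : H.Adj v b := (adj_v_iff hNv hbA).mpr (Or.inr rfl)
  have hvnot1 : v ≠ z1 := fun h => hv (h ▸ hz1A)
  have hvnota : v ≠ a := fun h => hv (h ▸ haA)
  have hXeq : (H.neighborSet b ∩ insert v A) \ {z1, a} = {v} := by
    rw [nbhd_insert_adj hvb.symm, hNb,
      Set.insert_diff_of_notMem _ (by simp [hvnot1, hvnota]), Set.diff_self]
    simp
  refine ⟨b, Or.inr hbA, z1, a, Or.inr hz1A, Or.inr haA, hz1.symm, hbz1, hab.symm, ?_, ?_,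
    ∅, {v}, ?_, ?_, ?_, ?_⟩
  · rw [hXeq]; exact ⟨v, rfl⟩
  · rw [hXeq]
    rintro u rfl w rfl
    exact H.irrefl
  · rw [Set.empty_union, hXeq]
  · simp
  · rintro x hx; exact absurd hx (Set.notMem_empty x)
  · rintro x rfl
    rw [nbhd_insert_self, hNv]

lemma key3a
    (hv : v ∉ A) (haA : a ∈ A) (hbA : b ∈ A) (hab : H.Adj a b)
    (hNv : H.neighborSet v ∩ A = {a, b})
    (hzA : z ∈ A) (hz1A : z1 ∈ A)
    (hz1 : H.Adj z z1)
    (hS : S1 ∪ S2 = (H.neighborSet z ∩ A) \ {z1, z2})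
    (hS1 : ∀ x ∈ S1, H.neighborSet x ∩ A = {z1, z})
    (hzb : z ≠ b)
    (haS : a ∈ S1) :
    ∃ z', CrystOn H (insert v A) z' := by
  have hNa : H.neighborSet a ∩ A = {z1, z} := hS1 a haS
  have hb1 : b = z1 := by
    have : b ∈ H.neighborSet a ∩ A := ⟨hab, hbA⟩
    rw [hNa] at this
    rcases this with h | h
    · exact h
    · exact absurd h.symm hzb
  have haz : H.Adj z a := by
    have : a ∈ (H.neighborSet z ∩ A) \ {z1, z2} := hS ▸ Or.inl haS
    exact this.1.1
  have haz1 : H.Adj a z1 := by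
    have : z1 ∈ H.neighborSet a ∩ A := by rw [hNa]; exact Or.inl rfl
    exact this.1
  have hva : H.Adj v a := (adj_v_iff hNv haA).mpr (Or.inl rfl)
  have hvnot1 : v ≠ z1 := fun h => hv (h ▸ hz1A)
  have hvnotz : v ≠ z := fun h => hv (h ▸ hzA)
  have hXeq : (H.neighborSet a ∩ insert v A) \ {z1, z} = {v} := by
    rw [nbhd_insert_adj hva.symm, hNa,
      Set.insert_diff_of_notMem _ (by simp [hvnot1, hvnotz]), Set.diff_self]
    simp
  refine ⟨a, Or.inr haA, z1, z, Or.inr hz1A, Or.inr hzA, hz1.symm, haz1, haz.symm, ?_, ?_,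
    {v}, ∅, ?_, ?_, ?_, ?_⟩
  · rw [hXeq]; exact ⟨v, rfl⟩
  · rw [hXeq]
    rintro u rfl w rfl
    exact H.irrefl
  · rw [Set.union_empty, hXeq]
  · simp
  · rintro x rfl
    rw [nbhd_insert_self, hNv, Set.pair_comm, hb1]
  · rintro x hx; exact absurd hx (Set.notMem_empty x)

lemma key3c
    (hv : v ∉ A)
    (hNv : H.neighborSet v ∩ A = {a, b})
    (hzA : z ∈ A) (hz1A : z1 ∈ A) (hz2A : z2 ∈ A)
    (h12 : H.Adj z1 z2) (hz1 : H.Adj z z1) (hz2 : H.Adj z z2)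
    (hstab : ∀ u ∈ (H.neighborSet z ∩ A) \ {z1, z2}, ∀ w ∈ (H.neighborSet z ∩ A) \ {z1, z2},
      ¬ H.Adj u w)
    (hS : S1 ∪ S2 = (H.neighborSet z ∩ A) \ {z1, z2})
    (hdisj : Disjoint S1 S2)
    (hS1 : ∀ x ∈ S1, H.neighborSet x ∩ A = {z1, z})
    (hS2 : ∀ x ∈ S2, H.neighborSet x ∩ A = {z2, z})
    (hza : z ≠ a) (hzb : z ≠ b)
    (haS : a ∉ S1 ∪ S2) (hbS : b ∉ S1 ∪ S2)
    (hne : (S1 ∪ S2).Nonempty) :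
    ∃ z', CrystOn H (insert v A) z' := by
  have hnzv : ¬ H.Adj z v := by
    intro h
    rcases (adj_v_iff hNv hzA).mp h.symm with rfl | rfl
    · exact hza rfl
    · exact hzb rfl
  have hXeq : (H.neighborSet z ∩ insert v A) \ {z1, z2}
      = (H.neighborSet z ∩ A) \ {z1, z2} := by
    rw [nbhd_insert_nonadj hnzv]
  have hnov : ∀ x ∈ S1 ∪ S2, ¬ H.Adj x v := by
    intro x hx hadj
    have hxA : x ∈ A := (hS ▸ hx : x ∈ (H.neighborSet z ∩ A) \ {z1, z2}).1.2
    rcases (adj_v_iff hNv hxA).mp hadj.symm with rfl | rfl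
    · exact haS hx
    · exact hbS hx
  refine ⟨z, Or.inr hzA, z1, z2, Or.inr hz1A, Or.inr hz2A, h12, hz1, hz2, ?_, ?_,
    S1, S2, ?_, hdisj, ?_, ?_⟩
  · rw [hXeq]; exact hS ▸ hne
  · rw [hXeq]; exact hstab
  · rw [hXeq]; exact hS
  · intro x hx
    rw [nbhd_insert_nonadj (hnov x (Or.inl hx))]
    exact hS1 x hx
  · intro x hx
    rw [nbhd_insert_nonadj (hnov x (Or.inr hx))]
    exact hS2 x hx

/-- Master step, case `z = a`. -/
lemma keyZ
    (hv : v ∉ A) (haA : a ∈ A) (hbA : b ∈ A) (hab : H.Adj a b)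
    (hNv : H.neighborSet v ∩ A = {a, b})
    (hz1A : z1 ∈ A) (hz2A : z2 ∈ A)
    (h12 : H.Adj z1 z2) (hz1 : H.Adj a z1) (hz2 : H.Adj a z2)
    (hstab : ∀ u ∈ (H.neighborSet a ∩ A) \ {z1, z2}, ∀ w ∈ (H.neighborSet a ∩ A) \ {z1, z2},
      ¬ H.Adj u w)
    (hS : S1 ∪ S2 = (H.neighborSet a ∩ A) \ {z1, z2})
    (hdisj : Disjoint S1 S2)
    (hS1 : ∀ x ∈ S1, H.neighborSet x ∩ A = {z1, a})
    (hS2 : ∀ x ∈ S2, H.neighborSet x ∩ A = {z2, a}) :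
    ∃ z', CrystOn H (insert v A) z' := by
  by_cases hb1 : b = z1
  · exact key1a hv haA hbA hab hNv hz1A hz2A h12 hz1 hz2 hstab hS hdisj hS1 hS2 hb1
  by_cases hb2 : b = z2
  · have hp : ({z2, z1} : Set W) = {z1, z2} := Set.pair_comm _ _
    exact key1a hv haA hbA hab hNv hz2A hz1A h12.symm hz2 hz1
      (hp ▸ hstab) (by rw [Set.union_comm, hp]; exact hS) hdisj.symm hS2 hS1 hb2
  have hbS : b ∈ S1 ∪ S2 := by
    rw [hS]
    exact ⟨⟨hab, hbA⟩, by simp [hb1, hb2]⟩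
  rcases hbS with hbS | hbS
  · exact key1c hv haA hbA hab hNv hz1A hz1 hS1 hbS
  · exact key1c hv haA hbA hab hNv hz2A hz2 hS2 hbS

/-- The master step lemma. -/
lemma key
    (hv : v ∉ A) (haA : a ∈ A) (hbA : b ∈ A) (hab : H.Adj a b)
    (hNv : H.neighborSet v ∩ A = {a, b})
    (hzA : z ∈ A) (hz1A : z1 ∈ A) (hz2A : z2 ∈ A)
    (h12 : H.Adj z1 z2) (hz1 : H.Adj z z1) (hz2 : H.Adj z z2)
    (hstab : ∀ u ∈ (H.neighborSet z ∩ A) \ {z1, z2}, ∀ w ∈ (H.neighborSet z ∩ A) \ {z1, z2},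
      ¬ H.Adj u w)
    (hS : S1 ∪ S2 = (H.neighborSet z ∩ A) \ {z1, z2})
    (hdisj : Disjoint S1 S2)
    (hS1 : ∀ x ∈ S1, H.neighborSet x ∩ A = {z1, z})
    (hS2 : ∀ x ∈ S2, H.neighborSet x ∩ A = {z2, z})
    (hne : (S1 ∪ S2).Nonempty ∨ z = a ∨ z = b) :
    ∃ z', CrystOn H (insert v A) z' := by
  by_cases hza : z = a
  · subst hza
    exact keyZ hv haA hbA hab hNv hz1A hz2A h12 hz1 hz2 hstab hS hdisj hS1 hS2
  by_cases hzb : z = b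
  · subst hzb
    exact keyZ hv hbA haA hab.symm (by rw [hNv, Set.pair_comm]) hz1A hz2A h12 hz1 hz2
      hstab hS hdisj hS1 hS2
  have hp : ({z2, z1} : Set W) = {z1, z2} := Set.pair_comm _ _
  by_cases haS1 : a ∈ S1
  · exact key3a hv haA hbA hab hNv hzA hz1A hz1 hS hS1 hzb haS1
  by_cases haS2 : a ∈ S2
  · exact key3a hv haA hbA hab hNv hzA hz2A hz2
      (by rw [Set.union_comm, hp]; exact hS) hS2 hzb haS2
  by_cases hbS1 : b ∈ S1
  · exact key3a hv hbA haA hab.symm (by rw [hNv, Set.pair_comm]) hzA hz1A hz1 hS hS1 hza hbS1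
  by_cases hbS2 : b ∈ S2
  · exact key3a hv hbA haA hab.symm (by rw [hNv, Set.pair_comm]) hzA hz2A hz2
      (by rw [Set.union_comm, hp]; exact hS) hS2 hza hbS2
  have hne' : (S1 ∪ S2).Nonempty := by
    rcases hne with h | h | h
    · exact h
    · exact absurd h hza
    · exact absurd h hzb
  exact key3c hv hNv hzA hz1A hz2A h12 hz1 hz2 hstab hS hdisj hS1 hS2 hza hzb
    (by simp [haS1, haS2]) (by simp [hbS1, hbS2]) hne'


/-- Base core: attach `v` to an edge `{a, b}` of a triangle `{a, b, c}` covering `A`. -/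
lemma base_core
    (hv : v ∉ A) (haA : a ∈ A) (hbA : b ∈ A) (hab : H.Adj a b)
    (hNv : H.neighborSet v ∩ A = {a, b}) :
    ∀ c : W, c ∈ A → H.Adj a c → H.Adj b c → A ⊆ {a, b, c} →
    ∃ z', CrystOn H (insert v A) z' := by
  intro c hcA hac hbc hcover
  have hempty : (H.neighborSet a ∩ A) \ {b, c} = ∅ := by
    rw [Set.eq_empty_iff_forall_notMem]
    rintro u ⟨⟨hu1, hu2⟩, hu3⟩
    simp only [Set.mem_insert_iff, Set.mem_singleton_iff, not_or] at hu3
    rcases hcover hu2 with rfl | rfl | rfl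
    · exact H.irrefl hu1
    · exact hu3.1 rfl
    · exact hu3.2 rfl
  refine key (S1 := (∅ : Set W)) (S2 := (∅ : Set W)) hv haA hbA hab hNv haA hbA hcA hbc hab hac ?_ ?_ (by simp) ?_ ?_
    (Or.inr (Or.inl rfl))
  · intro u hu
    rw [hempty] at hu
    exact absurd hu (Set.notMem_empty u)
  · rw [Set.empty_union, hempty]
  · rintro x hx; exact absurd hx (Set.notMem_empty x)
  · rintro x hx; exact absurd hx (Set.notMem_empty x)

lemma tri_pick {c1 c2 c3 : W}
    (hA : A = {c1, c2, c3}) (h12 : H.Adj c1 c2) (h13 : H.Adj c1 c3) (h23 : H.Adj c2 c3)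
    (haA : a ∈ A) (hbA : b ∈ A) (hab : a ≠ b) :
    ∃ c, c ∈ A ∧ H.Adj a c ∧ H.Adj b c ∧ A ⊆ {a, b, c} := by
  have hm1 : c1 ∈ A := by rw [hA]; exact Or.inl rfl
  have hm2 : c2 ∈ A := by rw [hA]; exact Or.inr (Or.inl rfl)
  have hm3 : c3 ∈ A := by rw [hA]; exact Or.inr (Or.inr rfl)
  have hmem : ∀ x : W, x ∈ A → x = c1 ∨ x = c2 ∨ x = c3 := by
    intro x hx; rw [hA] at hx; simpa using hx
  rcases hmem a haA with h1 | h1 | h1 <;> rcases hmem b hbA with h2 | h2 | h2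
  · exact absurd (h1.trans h2.symm) hab
  · exact ⟨c3, hm3, by rw [h1]; exact h13, by rw [h2]; exact h23,
      by rw [hA, h1, h2]; try (intro u hu; simp at hu ⊢; tauto)⟩
  · exact ⟨c2, hm2, by rw [h1]; exact h12, by rw [h2]; exact h23.symm,
      by rw [hA, h1, h2]; try (intro u hu; simp at hu ⊢; tauto)⟩
  · exact ⟨c3, hm3, by rw [h1]; exact h23, by rw [h2]; exact h13,
      by rw [hA, h1, h2]; try (intro u hu; simp at hu ⊢; tauto)⟩
  · exact absurd (h1.trans h2.symm) hab
  · exact ⟨c1, hm1, by rw [h1]; exact h12.symm, by rw [h2]; exact h13.symm,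
      by rw [hA, h1, h2]; try (intro u hu; simp at hu ⊢; tauto)⟩
  · exact ⟨c2, hm2, by rw [h1]; exact h23.symm, by rw [h2]; exact h12,
      by rw [hA, h1, h2]; try (intro u hu; simp at hu ⊢; tauto)⟩
  · exact ⟨c1, hm1, by rw [h1]; exact h13.symm, by rw [h2]; exact h12.symm,
      by rw [hA, h1, h2]; try (intro u hu; simp at hu ⊢; tauto)⟩
  · exact absurd (h1.trans h2.symm) hab

lemma base_triangle {c1 c2 c3 : W}
    (hA : A = {c1, c2, c3}) (h12 : H.Adj c1 c2) (h13 : H.Adj c1 c3) (h23 : H.Adj c2 c3)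
    (hv : v ∉ A) (haA : a ∈ A) (hbA : b ∈ A) (hab : H.Adj a b)
    (hNv : H.neighborSet v ∩ A = {a, b}) :
    ∃ z', CrystOn H (insert v A) z' := by
  obtain ⟨c, hcA, hac, hbc, hcover⟩ := tri_pick hA h12 h13 h23 haA hbA hab.ne
  exact base_core hv haA hbA hab hNv c hcA hac hbc hcover

end Key

section Tail

variable {n : ℕ}

def tail (σ : Fin n ≃ W) (j : ℕ) : Set W := {w | ∃ i : Fin n, j ≤ (i : ℕ) ∧ σ i = w}

lemma tail_zero (σ : Fin n ≃ W) : tail σ 0 = univ := by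
  ext w
  simp only [tail, Set.mem_setOf_eq, Set.mem_univ, iff_true]
  exact ⟨σ.symm w, Nat.zero_le _, σ.apply_symm_apply w⟩

lemma tail_of_ge (σ : Fin n ≃ W) {j : ℕ} (h : n ≤ j) : tail σ j = ∅ := by
  ext w
  simp only [tail, Set.mem_setOf_eq, Set.mem_empty_iff_false, iff_false]
  rintro ⟨i, hi, -⟩
  exact absurd (lt_of_lt_of_le i.isLt h) (not_lt.mpr hi)

lemma tail_insert (σ : Fin n ≃ W) {j : ℕ} (hj : j < n) :
    tail σ j = insert (σ ⟨j, hj⟩) (tail σ (j + 1)) := by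
  ext w
  simp only [tail, Set.mem_setOf_eq, Set.mem_insert_iff]
  constructor
  · rintro ⟨i, hi, rfl⟩
    rcases eq_or_lt_of_le hi with h | h
    · left; congr 1; exact Fin.ext h.symm
    · right; exact ⟨i, h, rfl⟩
  · rintro (rfl | ⟨i, hi, rfl⟩)
    · exact ⟨⟨j, hj⟩, le_refl _, rfl⟩
    · exact ⟨i, le_of_lt (Nat.lt_of_succ_le hi), rfl⟩

lemma notMem_tail (σ : Fin n ≃ W) {j : ℕ} (hj : j < n) :
    σ ⟨j, hj⟩ ∉ tail σ (j + 1) := by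
  rintro ⟨i, hi, heq⟩
  have := σ.injective heq
  rw [Fin.ext_iff] at this
  simp at this
  omega

lemma forward_eq (H : SimpleGraph W) (σ : Fin n ≃ W) {j : ℕ} (hj : j < n) :
    {w : W | ∃ i, (⟨j, hj⟩ : Fin n) < i ∧ σ i = w ∧ H.Adj (σ ⟨j, hj⟩) w}
      = H.neighborSet (σ ⟨j, hj⟩) ∩ tail σ (j + 1) := by
  ext w
  simp only [Set.mem_setOf_eq, Set.mem_inter_iff, SimpleGraph.mem_neighborSet, tail]
  constructor
  · rintro ⟨i, hlt, rfl, hadj⟩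
    rw [Fin.lt_def] at hlt
    exact ⟨hadj, i, by simpa using hlt, rfl⟩
  · rintro ⟨hadj, i, hle, rfl⟩
    refine ⟨i, ?_, rfl, hadj⟩
    rw [Fin.lt_def]
    simpa using Nat.lt_of_succ_le hle

end Tail

lemma main_ind (H : SimpleGraph W) {n : ℕ} (σ : Fin n ≃ W)
    (hσ : ∀ i : Fin n, (i : ℕ) < n - 2 →
      H.IsClique {w : W | ∃ j, i < j ∧ σ j = w ∧ H.Adj (σ i) w} ∧
      {w : W | ∃ j, i < j ∧ σ j = w ∧ H.Adj (σ i) w}.ncard = 2) :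
    ∀ k, 4 ≤ k → ∀ j, j + k = n → ∃ z, CrystOn H (tail σ j) z := by
  have hF : ∀ (j : ℕ) (hj : j < n), j < n - 2 →
      ∃ a b, a ≠ b ∧ H.Adj a b ∧
        H.neighborSet (σ ⟨j, hj⟩) ∩ tail σ (j + 1) = {a, b} := by
    intro j hj hj2
    obtain ⟨hcl, hc2⟩ := hσ ⟨j, hj⟩ hj2
    rw [forward_eq H σ hj] at hcl hc2
    obtain ⟨a, b, hab, heq⟩ := Set.ncard_eq_two.mp hc2
    refine ⟨a, b, hab, ?_, heq⟩
    have haM : a ∈ H.neighborSet (σ ⟨j, hj⟩) ∩ tail σ (j + 1) := by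
      rw [heq]; exact Or.inl rfl
    have hbM : b ∈ H.neighborSet (σ ⟨j, hj⟩) ∩ tail σ (j + 1) := by
      rw [heq]; exact Or.inr rfl
    exact hcl haM hbM hab
  intro k hk
  induction k, hk using Nat.le_induction with
  | base =>
    intro j hjn
    have hj0 : j < n := by omega
    have hj1 : j + 1 < n := by omega
    have hj2 : j + 1 + 1 < n := by omega
    have hj3 : j + 1 + 1 + 1 < n := by omega
    set c0 := σ ⟨j, hj0⟩ with hc0
    set c1 := σ ⟨j + 1, hj1⟩ with hc1
    set c2 := σ ⟨j + 1 + 1, hj2⟩ with hc2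
    set c3 := σ ⟨j + 1 + 1 + 1, hj3⟩ with hc3
    have e0 : tail σ j = insert c0 (tail σ (j + 1)) := tail_insert σ hj0
    have e1 : tail σ (j + 1) = insert c1 (tail σ (j + 1 + 1)) := tail_insert σ hj1
    have e2 : tail σ (j + 1 + 1) = insert c2 (tail σ (j + 1 + 1 + 1)) := tail_insert σ hj2
    have e3 : tail σ (j + 1 + 1 + 1) = insert c3 (tail σ (j + 1 + 1 + 1 + 1)) :=
      tail_insert σ hj3
    have e4 : tail σ (j + 1 + 1 + 1 + 1) = ∅ := tail_of_ge σ (by omega)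
    have ht2 : tail σ (j + 1 + 1) = {c2, c3} := by
      rw [e2, e3, e4]
      simp
    have hA : tail σ (j + 1) = {c1, c2, c3} := by
      rw [e1, ht2]
    -- the triangle on {c1, c2, c3}
    obtain ⟨a', b', hne', hab', heq'⟩ := hF (j + 1) hj1 (by omega)
    have ha'm : a' ∈ ({c2, c3} : Set W) := by
      rw [← ht2]
      exact (show a' ∈ H.neighborSet c1 ∩ tail σ (j + 1 + 1) by
        rw [heq']; exact Or.inl rfl).2
    have hb'm : b' ∈ ({c2, c3} : Set W) := by
      rw [← ht2]
      exact (show b' ∈ H.neighborSet c1 ∩ tail σ (j + 1 + 1) by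
        rw [heq']; exact Or.inr rfl).2
    have hset : ({a', b'} : Set W) = {c2, c3} ∧ H.Adj c2 c3 := by
      rcases ha'm with ha' | ha' <;> rcases hb'm with hb' | hb'
      · exact absurd (ha'.trans hb'.symm) hne'
      · constructor
        · rw [ha', hb']
        · rw [← ha', ← hb']; exact hab'
      · constructor
        · rw [ha', hb', Set.pair_comm]
        · rw [← hb', ← ha']; exact hab'.symm
      · exact absurd (ha'.trans hb'.symm) hne'
    have h23 : H.Adj c2 c3 := hset.2
    have h12 : H.Adj c1 c2 := by
      have : c2 ∈ H.neighborSet c1 ∩ tail σ (j + 1 + 1) := by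
        rw [heq', hset.1]; exact Or.inl rfl
      exact this.1
    have h13 : H.Adj c1 c3 := by
      have : c3 ∈ H.neighborSet c1 ∩ tail σ (j + 1 + 1) := by
        rw [heq', hset.1]; exact Or.inr rfl
      exact this.1
    -- the edge of attachment of c0
    obtain ⟨a, b, hne, hab, hNa⟩ := hF j hj0 (by omega)
    have haA : a ∈ tail σ (j + 1) :=
      (show a ∈ H.neighborSet c0 ∩ tail σ (j + 1) by rw [hNa]; exact Or.inl rfl).2
    have hbA : b ∈ tail σ (j + 1) :=
      (show b ∈ H.neighborSet c0 ∩ tail σ (j + 1) by rw [hNa]; exact Or.inr rfl).2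
    rw [e0]
    exact base_triangle hA h12 h13 h23 (notMem_tail σ hj0) haA hbA hab hNa
  | succ k hk ih =>
    intro j hjn
    have hj0 : j < n := by omega
    obtain ⟨z, hz⟩ := ih (j + 1) (by omega)
    obtain ⟨a, b, hne, hab, hNa⟩ := hF j hj0 (by omega)
    obtain ⟨hzA, z1, z2, hz1A, hz2A, h12, hz1, hz2, hnon, hstab, S1, S2, hS, hdisj, hS1, hS2⟩
      := hz
    have haA : a ∈ tail σ (j + 1) :=
      (show a ∈ H.neighborSet (σ ⟨j, hj0⟩) ∩ tail σ (j + 1) by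
        rw [hNa]; exact Or.inl rfl).2
    have hbA : b ∈ tail σ (j + 1) :=
      (show b ∈ H.neighborSet (σ ⟨j, hj0⟩) ∩ tail σ (j + 1) by
        rw [hNa]; exact Or.inr rfl).2
    rw [tail_insert σ hj0]
    exact key (notMem_tail σ hj0) haA hbA hab hNa hzA hz1A hz2A h12 hz1 hz2 hstab hS hdisj
      hS1 hS2 (Or.inl (by rw [hS]; exact hnon))

/-- Every 2-tree on at least four vertices has a crystallized vertex. -/
theorem stmt8 {W : Type} [Fintype W] (H : SimpleGraph W)
    (hH : IsKTree 2 H) (hcard : 4 ≤ Fintype.card W) :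
    ∃ z : W, Crystallized H z := by
  rcases hH with ⟨h2, -⟩ | ⟨hlt, σ, hσ⟩
  · omega
  obtain ⟨z, hz⟩ := main_ind H σ hσ (Fintype.card W) hcard 0 (by omega)
  rw [tail_zero] at hz
  exact ⟨z, crystOn_univ hz⟩
end

section
/- Let f,g≥1 and r≥0 be integers, let G be a graph, let Z0 be a 2-clique in G and let p=(Z0,…,Z_r;Γ_i : i∈[r]) be a (Z0, f+g, r)-phantom in G. Then one of the following holds: (a) there is an (f,g)-crystal in the induced subgraph G[Z_r]; or (b) there are g pairwise disjoint r-cliques K_1,…,K_g⊆Z_r∖Z0 in G such that Z0 is complete to K_1∪⋯∪K_g. -/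
variable {V : Type}

/-- Tower predicate: a chain of phantom vertices rooted at the base edge `s(y0,y1)` at
level offset `j`, forming (together with the base) a clique. -/
def IsTw (G : SimpleGraph V) (Γ : ℕ → Sym2 V → Set V) : ℕ → V → V → List V → Prop
  | _, _, _, [] => True
  | j, y0, y1, w :: cs =>
      w ∈ Γ (j + 1) s(y0, y1) ∧
      ((IsTw G Γ (j + 1) y0 w cs ∧ ∀ x ∈ cs, G.Adj y1 x) ∨
       (IsTw G Γ (j + 1) y1 w cs ∧ ∀ x ∈ cs, G.Adj y0 x))

lemma tw_tail {G : SimpleGraph V} {Γ : ℕ → Sym2 V → Set V} {j : ℕ} {y0 y1 w : V} {cs : List V}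
    (h : IsTw G Γ j y0 y1 (w :: cs)) :
    ∃ yb, (yb = y0 ∨ yb = y1) ∧ IsTw G Γ (j + 1) yb w cs := by
  rcases h.2 with ⟨ht, _⟩ | ⟨ht, _⟩
  · exact ⟨y0, Or.inl rfl, ht⟩
  · exact ⟨y1, Or.inr rfl, ht⟩

section Phantom

variable (G : SimpleGraph V) (Zs : ℕ → Set V) (Γ : ℕ → Sym2 V → Set V) (d r : ℕ)

variable (hmono : ∀ i, i < r → Zs i ⊆ Zs (i + 1))
variable (hmain : ∀ i, i < r → ∀ u v : V, G.Adj u v → u ∈ Zs i → v ∈ Zs i →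
    (Γ (i + 1) s(u, v)).Finite ∧ (Γ (i + 1) s(u, v)).ncard = d ∧
    Γ (i + 1) s(u, v) ⊆ Zs (i + 1) \ Zs i ∧
    ∀ x ∈ Γ (i + 1) s(u, v), G.Adj u x ∧ G.Adj v x)

include hmono in
lemma zs_chain : ∀ {a b : ℕ}, a ≤ b → b ≤ r → Zs a ⊆ Zs b := by
  intro a b hab
  induction b, hab using Nat.le_induction with
  | base => intro _; exact subset_rfl
  | succ n hn ihn => intro hbr; exact (ihn (by omega)).trans (hmono n (by omega))

include hmono hmain in
/-- basic properties of towers : all vertices adjacent to both base vertices, inside `Zs r`,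
outside `Zs j`. -/
lemma tw_props : ∀ (L : List V) (j : ℕ) (y0 y1 : V), j + L.length ≤ r →
    G.Adj y0 y1 → y0 ∈ Zs j → y1 ∈ Zs j → IsTw G Γ j y0 y1 L →
    ∀ x ∈ L, (G.Adj y0 x ∧ G.Adj y1 x) ∧ x ∈ Zs r ∧ x ∉ Zs j := by
  intro L
  induction L with
  | nil => intro j y0 y1 _ _ _ _ _ x hx; simp at hx
  | cons w cs ih =>
    intro j y0 y1 hlen hadj hy0 hy1 htw x hx
    have hj : j < r := by simp [List.length_cons] at hlen; omega
    obtain ⟨hfin, hcard, hsub, hadjA⟩ := hmain j hj y0 y1 hadj hy0 hy1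
    have hwA := htw.1
    have hw1 : w ∈ Zs (j + 1) := (hsub hwA).1
    have hw0 : w ∉ Zs j := (hsub hwA).2
    have hwadj := hadjA w hwA
    rcases List.mem_cons.mp hx with rfl | hxcs
    · exact ⟨hwadj, zs_chain Zs r hmono (by omega) (by omega) hw1, hw0⟩
    · have hlen' : (j + 1) + cs.length ≤ r := by simp [List.length_cons] at hlen; omega
      rcases htw.2 with ⟨ht, ha⟩ | ⟨ht, ha⟩
      · have := ih (j + 1) y0 w hlen' hwadj.1 (hmono j hj hy0) hw1 ht x hxcs
        exact ⟨⟨this.1.1, ha x hxcs⟩, this.2.1, fun hc => this.2.2 (hmono j hj hc)⟩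
      · have := ih (j + 1) y1 w hlen' hwadj.2 (hmono j hj hy1) hw1 ht x hxcs
        exact ⟨⟨ha x hxcs, this.1.1⟩, this.2.1, fun hc => this.2.2 (hmono j hj hc)⟩

include hmono hmain in
/-- towers are cliques. -/
lemma tw_clique : ∀ (L : List V) (j : ℕ) (y0 y1 : V), j + L.length ≤ r →
    G.Adj y0 y1 → y0 ∈ Zs j → y1 ∈ Zs j → IsTw G Γ j y0 y1 L →
    ∀ x ∈ L, ∀ y ∈ L, x ≠ y → G.Adj x y := by
  intro L
  induction L with
  | nil => intro j y0 y1 _ _ _ _ _ x hx; simp at hx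
  | cons w cs ih =>
    intro j y0 y1 hlen hadj hy0 hy1 htw x hx y hy hxy
    have hj : j < r := by simp [List.length_cons] at hlen; omega
    obtain ⟨hfin, hcard, hsub, hadjA⟩ := hmain j hj y0 y1 hadj hy0 hy1
    have hwA := htw.1
    have hw1 : w ∈ Zs (j + 1) := (hsub hwA).1
    have hwadj := hadjA w hwA
    have hlen' : (j + 1) + cs.length ≤ r := by simp [List.length_cons] at hlen; omega
    obtain ⟨yb, hyb, ht⟩ := tw_tail htw
    have hybz : yb ∈ Zs (j + 1) := by
      rcases hyb with rfl | rfl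
      · exact hmono j hj hy0
      · exact hmono j hj hy1
    have hybw : G.Adj yb w := by
      rcases hyb with rfl | rfl
      · exact hwadj.1
      · exact hwadj.2
    have htail := tw_props G Zs Γ d r hmono hmain cs (j + 1) yb w hlen' hybw hybz hw1 ht
    rcases List.mem_cons.mp hx with rfl | hxcs <;> rcases List.mem_cons.mp hy with rfl | hycs
    · exact absurd rfl hxy
    · exact (htail y hycs).1.2
    · exact ((htail x hxcs).1.2).symm
    · exact ih (j + 1) yb w hlen' hybw hybz hw1 ht x hxcs y hycs hxy

include hmono hmain in
lemma tw_nodup : ∀ (L : List V) (j : ℕ) (y0 y1 : V), j + L.length ≤ r →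
    G.Adj y0 y1 → y0 ∈ Zs j → y1 ∈ Zs j → IsTw G Γ j y0 y1 L → L.Nodup := by
  intro L
  induction L with
  | nil => intro _ _ _ _ _ _ _ _; exact List.nodup_nil
  | cons w cs ih =>
    intro j y0 y1 hlen hadj hy0 hy1 htw
    have hj : j < r := by simp [List.length_cons] at hlen; omega
    obtain ⟨hfin, hcard, hsub, hadjA⟩ := hmain j hj y0 y1 hadj hy0 hy1
    have hwA := htw.1
    have hw1 : w ∈ Zs (j + 1) := (hsub hwA).1
    have hwadj := hadjA w hwA
    have hlen' : (j + 1) + cs.length ≤ r := by simp [List.length_cons] at hlen; omega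
    obtain ⟨yb, hyb, ht⟩ := tw_tail htw
    have hybz : yb ∈ Zs (j + 1) := by
      rcases hyb with rfl | rfl
      · exact hmono j hj hy0
      · exact hmono j hj hy1
    have hybw : G.Adj yb w := by
      rcases hyb with rfl | rfl
      · exact hwadj.1
      · exact hwadj.2
    have htail := tw_props G Zs Γ d r hmono hmain cs (j + 1) yb w hlen' hybw hybz hw1 ht
    refine List.nodup_cons.mpr ⟨fun hc => ?_, ih (j + 1) yb w hlen' hybw hybz hw1 ht⟩
    exact (htail w hc).2.2 hw1



variable (hdisj : ∀ i, i < r → ∀ u v u' v' : V, G.Adj u v → u ∈ Zs i → v ∈ Zs i →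
    G.Adj u' v' → u' ∈ Zs i → v' ∈ Zs i → s(u, v) ≠ s(u', v') →
    Γ (i + 1) s(u, v) ∩ Γ (i + 1) s(u', v') = ∅)

include hmono hmain hdisj in
/-- Towers rooted at distinct base edges are vertex-disjoint. -/
lemma tw_disj : ∀ (L L' : List V) (j : ℕ) (y0 y1 y0' y1' : V),
    j + L.length ≤ r → j + L'.length ≤ r →
    G.Adj y0 y1 → G.Adj y0' y1' →
    y0 ∈ Zs j → y1 ∈ Zs j → y0' ∈ Zs j → y1' ∈ Zs j →
    s(y0, y1) ≠ s(y0', y1') →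
    IsTw G Γ j y0 y1 L → IsTw G Γ j y0' y1' L' →
    ∀ x ∈ L, x ∉ L' := by
  intro L
  induction L with
  | nil => intro L' j y0 y1 y0' y1' _ _ _ _ _ _ _ _ _ _ _ x hx; simp at hx
  | cons w cs ih =>
    intro L' j y0 y1 y0' y1' hlen hlen' hadj hadj' hy0 hy1 hy0' hy1' hne htw htw' x hx
    match L', htw' with
    | [], _ => simp
    | w' :: cs', htw' =>
    have hj : j < r := by simp [List.length_cons] at hlen; omega
    obtain ⟨hfin, hcard, hsub, hadjA⟩ := hmain j hj y0 y1 hadj hy0 hy1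
    obtain ⟨hfin', hcard', hsub', hadjA'⟩ := hmain j hj y0' y1' hadj' hy0' hy1'
    have hwA := htw.1
    have hwA' := htw'.1
    have hw1 : w ∈ Zs (j + 1) := (hsub hwA).1
    have hw1' : w' ∈ Zs (j + 1) := (hsub' hwA').1
    have hw0 : w ∉ Zs j := (hsub hwA).2
    have hw0' : w' ∉ Zs j := (hsub' hwA').2
    have hwadj := hadjA w hwA
    have hwadj' := hadjA' w' hwA'
    -- heads differ
    have hww' : w ≠ w' := by
      intro hEq
      have h0 := hdisj j hj y0 y1 y0' y1' hadj hy0 hy1 hadj' hy0' hy1' hne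
      have : w ∈ Γ (j + 1) s(y0, y1) ∩ Γ (j + 1) s(y0', y1') := ⟨hwA, hEq ▸ hwA'⟩
      rw [h0] at this
      exact this
    have hlen2 : (j + 1) + cs.length ≤ r := by simp [List.length_cons] at hlen; omega
    have hlen2' : (j + 1) + cs'.length ≤ r := by simp [List.length_cons] at hlen'; omega
    obtain ⟨ya, hya, ht⟩ := tw_tail htw
    obtain ⟨yb, hyb, ht'⟩ := tw_tail htw'
    have hyaz : ya ∈ Zs (j + 1) := by
      rcases hya with rfl | rfl
      · exact hmono j hj hy0
      · exact hmono j hj hy1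
    have hybz : yb ∈ Zs (j + 1) := by
      rcases hyb with rfl | rfl
      · exact hmono j hj hy0'
      · exact hmono j hj hy1'
    have hyaw : G.Adj ya w := by
      rcases hya with rfl | rfl
      · exact hwadj.1
      · exact hwadj.2
    have hybw : G.Adj yb w' := by
      rcases hyb with rfl | rfl
      · exact hwadj'.1
      · exact hwadj'.2
    have hyaj : ya ∈ Zs j := by rcases hya with rfl | rfl <;> assumption
    have hybj : yb ∈ Zs j := by rcases hyb with rfl | rfl <;> assumption
    have htail := tw_props G Zs Γ d r hmono hmain cs (j + 1) ya w hlen2 hyaw hyaz hw1 ht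
    have htail' := tw_props G Zs Γ d r hmono hmain cs' (j + 1) yb w' hlen2' hybw hybz hw1' ht'
    -- root edges of the tails differ
    have hne2 : s(ya, w) ≠ s(yb, w') := by
      intro hEq
      rw [Sym2.eq_iff] at hEq
      rcases hEq with ⟨h1, h2⟩ | ⟨h1, h2⟩
      · exact hww' h2
      · exact hw0' (h1 ▸ hyaj)
    intro hx'
    rcases List.mem_cons.mp hx with rfl | hxcs <;> rcases List.mem_cons.mp hx' with hEq | hxcs'
    · exact hww' hEq
    · exact (htail' x hxcs').2.2 hw1
    · exact (htail x hxcs).2.2 (hEq ▸ hw1')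
    · exact ih cs' (j + 1) ya w yb w' hlen2 hlen2' hyaw hybw hyaz hw1 hybz hw1' hne2 ht ht' x hxcs hxcs'

include hmono hmain hdisj in
lemma tw_main (f g : ℕ) (hf : 1 ≤ f) (hg : 1 ≤ g) (hd : d = f + g) :
    ∀ (k j : ℕ), j + k ≤ r → ∀ y0 y1 : V, G.Adj y0 y1 → y0 ∈ Zs j → y1 ∈ Zs j →
    (∃ (z1 z2 : V) (S : Finset V) (S1 S2 : V → Finset V),
      z1 ∈ Zs r ∧ z2 ∈ Zs r ∧ G.Adj z1 z2 ∧
      IsCrystalIn G z1 z2 f g S S1 S2 ∧ crystalVerts S S1 S2 ⊆ Zs r) ∨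
    (∃ T : Fin g → List V,
      (∀ t, IsTw G Γ j y0 y1 (T t) ∧ (T t).length = k) ∧
      (∀ t s, t ≠ s → ∀ x ∈ T t, x ∉ T s)) := by
  intro k
  induction k with
  | zero =>
    intro j hjk y0 y1 hadj hy0 hy1
    right
    exact ⟨fun _ => [], fun t => ⟨trivial, rfl⟩, fun t s _ x hx => by simp at hx⟩
  | succ k ih =>
    intro j hjk y0 y1 hadj hy0 hy1
    classical
    by_cases hcr : (∃ (z1 z2 : V) (S : Finset V) (S1 S2 : V → Finset V),
      z1 ∈ Zs r ∧ z2 ∈ Zs r ∧ G.Adj z1 z2 ∧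
      IsCrystalIn G z1 z2 f g S S1 S2 ∧ crystalVerts S S1 S2 ⊆ Zs r)
    · exact Or.inl hcr
    have hj : j < r := by omega
    obtain ⟨hfin, hcard, hsub, hadjA⟩ := hmain j hj y0 y1 hadj hy0 hy1
    have hy0' : y0 ∈ Zs (j + 1) := hmono j hj hy0
    have hy1' : y1 ∈ Zs (j + 1) := hmono j hj hy1
    -- the two recursive calls, for each w in the level set
    have hcall1 : ∀ w, ∃ T : Fin g → List V, w ∈ Γ (j + 1) s(y0, y1) →
        ((∀ t, IsTw G Γ (j + 1) y0 w (T t) ∧ (T t).length = k) ∧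
         (∀ t s, t ≠ s → ∀ x ∈ T t, x ∉ T s)) := by
      intro w
      by_cases hw : w ∈ Γ (j + 1) s(y0, y1)
      · rcases ih (j + 1) (by omega) y0 w (hadjA w hw).1 hy0' (hsub hw).1 with h | ⟨T, hT1, hT2⟩
        · exact absurd h hcr
        · exact ⟨T, fun _ => ⟨hT1, hT2⟩⟩
      · exact ⟨fun _ => [], fun h => absurd h hw⟩
    have hcall2 : ∀ w, ∃ T : Fin g → List V, w ∈ Γ (j + 1) s(y0, y1) →
        ((∀ t, IsTw G Γ (j + 1) y1 w (T t) ∧ (T t).length = k) ∧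
         (∀ t s, t ≠ s → ∀ x ∈ T t, x ∉ T s)) := by
      intro w
      by_cases hw : w ∈ Γ (j + 1) s(y0, y1)
      · rcases ih (j + 1) (by omega) y1 w (hadjA w hw).2 hy1' (hsub hw).1 with h | ⟨T, hT1, hT2⟩
        · exact absurd h hcr
        · exact ⟨T, fun _ => ⟨hT1, hT2⟩⟩
      · exact ⟨fun _ => [], fun h => absurd h hw⟩
    choose F1 hF1 using hcall1
    choose F2 hF2 using hcall2
    -- tower side facts
    have htow1 : ∀ w, w ∈ Γ (j + 1) s(y0, y1) → ∀ t : Fin g, ∀ x ∈ F1 w t,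
        (G.Adj y0 x ∧ G.Adj w x) ∧ x ∈ Zs r ∧ x ∉ Zs (j + 1) := by
      intro w hw t
      exact tw_props G Zs Γ d r hmono hmain (F1 w t) (j + 1) y0 w
        (by rw [((hF1 w hw).1 t).2]; omega) (hadjA w hw).1 hy0' (hsub hw).1 ((hF1 w hw).1 t).1
    have htow2 : ∀ w, w ∈ Γ (j + 1) s(y0, y1) → ∀ t : Fin g, ∀ x ∈ F2 w t,
        (G.Adj y1 x ∧ G.Adj w x) ∧ x ∈ Zs r ∧ x ∉ Zs (j + 1) := by
      intro w hw t
      exact tw_props G Zs Γ d r hmono hmain (F2 w t) (j + 1) y1 w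
        (by rw [((hF2 w hw).1 t).2]; omega) (hadjA w hw).2 hy1' (hsub hw).1 ((hF2 w hw).1 t).1
    -- poorness
    set Poor1 : V → Prop := fun w => ∀ t : Fin g, ∃ x ∈ F1 w t, ¬ G.Adj y1 x with hPoor1
    set Poor2 : V → Prop := fun w => ∀ t : Fin g, ∃ x ∈ F2 w t, ¬ G.Adj y0 x with hPoor2
    set Af := hfin.toFinset with hAfdef
    have hAfmem : ∀ w, w ∈ Af ↔ w ∈ Γ (j + 1) s(y0, y1) := fun w => Set.Finite.mem_toFinset hfin
    have hAf : Af.card = f + g := by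
      rw [hAfdef, ← Set.ncard_eq_toFinset_card _ hfin, hcard, hd]
    set P := Af.filter (fun w => Poor1 w ∧ Poor2 w) with hPdef
    by_cases hPf : f ≤ P.card
    · -- ===== crystal case =====
      exfalso
      apply hcr
      obtain ⟨Sf, hSP, hScard⟩ := Finset.exists_subset_card_eq hPf
      have hSfP : ∀ w ∈ Sf, w ∈ Γ (j + 1) s(y0, y1) ∧ Poor1 w ∧ Poor2 w := by
        intro w hw
        have := Finset.mem_filter.mp (hSP hw)
        exact ⟨(hAfmem w).mp this.1, this.2⟩
      have hpick1 : ∀ w, ∃ p : Fin g → V, Poor1 w → ∀ t, p t ∈ F1 w t ∧ ¬ G.Adj y1 (p t) := by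
        intro w
        by_cases hw : Poor1 w
        · rw [hPoor1] at hw
          choose p hp1 hp2 using hw
          exact ⟨p, fun _ t => ⟨hp1 t, hp2 t⟩⟩
        · exact ⟨fun _ => y0, fun h => absurd h hw⟩
      have hpick2 : ∀ w, ∃ p : Fin g → V, Poor2 w → ∀ t, p t ∈ F2 w t ∧ ¬ G.Adj y0 (p t) := by
        intro w
        by_cases hw : Poor2 w
        · rw [hPoor2] at hw
          choose p hp1 hp2 using hw
          exact ⟨p, fun _ t => ⟨hp1 t, hp2 t⟩⟩
        · exact ⟨fun _ => y0, fun h => absurd h hw⟩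
      choose p1 hp1 using hpick1
      choose p2 hp2 using hpick2
      set S1f : V → Finset V := fun w => Finset.image (p1 w) Finset.univ with hS1f
      set S2f : V → Finset V := fun w => Finset.image (p2 w) Finset.univ with hS2f
      -- root edge distinctness
      have hroot11 : ∀ w, w ∈ Γ (j + 1) s(y0, y1) → ∀ w', w' ∈ Γ (j + 1) s(y0, y1) →
          w ≠ w' → s(y0, w) ≠ s(y0, w') := by
        intro w hw w' hw' hne hEq
        rw [Sym2.eq_iff] at hEq
        rcases hEq with ⟨_, h2⟩ | ⟨h1, _⟩
        · exact hne h2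
        · exact (hsub hw').2 (h1 ▸ hy0)
      have hroot22 : ∀ w, w ∈ Γ (j + 1) s(y0, y1) → ∀ w', w' ∈ Γ (j + 1) s(y0, y1) →
          w ≠ w' → s(y1, w) ≠ s(y1, w') := by
        intro w hw w' hw' hne hEq
        rw [Sym2.eq_iff] at hEq
        rcases hEq with ⟨_, h2⟩ | ⟨h1, _⟩
        · exact hne h2
        · exact (hsub hw').2 (h1 ▸ hy1)
      have hroot12 : ∀ w, w ∈ Γ (j + 1) s(y0, y1) → ∀ w', w' ∈ Γ (j + 1) s(y0, y1) →
          s(y0, w) ≠ s(y1, w') := by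
        intro w hw w' hw' hEq
        rw [Sym2.eq_iff] at hEq
        rcases hEq with ⟨h1, _⟩ | ⟨h1, _⟩
        · exact (G.ne_of_adj hadj) h1
        · exact (hsub hw').2 (h1 ▸ hy0)
      -- disjointness of towers of type 1 across distinct w
      have hd11 : ∀ w, w ∈ Γ (j + 1) s(y0, y1) → ∀ w', w' ∈ Γ (j + 1) s(y0, y1) → w ≠ w' →
          ∀ t t' : Fin g, ∀ x ∈ F1 w t, x ∉ F1 w' t' := by
        intro w hw w' hw' hne t t'
        exact tw_disj G Zs Γ d r hmono hmain hdisj (F1 w t) (F1 w' t') (j + 1) y0 w y0 w'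
          (by rw [((hF1 w hw).1 t).2]; omega) (by rw [((hF1 w' hw').1 t').2]; omega)
          (hadjA w hw).1 (hadjA w' hw').1 hy0' (hsub hw).1 hy0' (hsub hw').1
          (hroot11 w hw w' hw' hne) ((hF1 w hw).1 t).1 ((hF1 w' hw').1 t').1
      have hd22 : ∀ w, w ∈ Γ (j + 1) s(y0, y1) → ∀ w', w' ∈ Γ (j + 1) s(y0, y1) → w ≠ w' →
          ∀ t t' : Fin g, ∀ x ∈ F2 w t, x ∉ F2 w' t' := by
        intro w hw w' hw' hne t t'
        exact tw_disj G Zs Γ d r hmono hmain hdisj (F2 w t) (F2 w' t') (j + 1) y1 w y1 w'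
          (by rw [((hF2 w hw).1 t).2]; omega) (by rw [((hF2 w' hw').1 t').2]; omega)
          (hadjA w hw).2 (hadjA w' hw').2 hy1' (hsub hw).1 hy1' (hsub hw').1
          (hroot22 w hw w' hw' hne) ((hF2 w hw).1 t).1 ((hF2 w' hw').1 t').1
      have hd12 : ∀ w, w ∈ Γ (j + 1) s(y0, y1) → ∀ w', w' ∈ Γ (j + 1) s(y0, y1) →
          ∀ t t' : Fin g, ∀ x ∈ F1 w t, x ∉ F2 w' t' := by
        intro w hw w' hw' t t'
        exact tw_disj G Zs Γ d r hmono hmain hdisj (F1 w t) (F2 w' t') (j + 1) y0 w y1 w'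
          (by rw [((hF1 w hw).1 t).2]; omega) (by rw [((hF2 w' hw').1 t').2]; omega)
          (hadjA w hw).1 (hadjA w' hw').2 hy0' (hsub hw).1 hy1' (hsub hw').1
          (hroot12 w hw w' hw') ((hF1 w hw).1 t).1 ((hF2 w' hw').1 t').1
      -- membership in S1f
      have hmem1 : ∀ w ∈ Sf, ∀ x, x ∈ S1f w → ∃ t : Fin g, p1 w t = x ∧ x ∈ F1 w t ∧ ¬ G.Adj y1 x := by
        intro w hw x hx
        rw [hS1f] at hx
        obtain ⟨t, _, ht⟩ := Finset.mem_image.mp hx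
        obtain ⟨h1, h2⟩ := hp1 w (hSfP w hw).2.1 t
        exact ⟨t, ht, ht ▸ h1, ht ▸ h2⟩
      have hmem2 : ∀ w ∈ Sf, ∀ x, x ∈ S2f w → ∃ t : Fin g, p2 w t = x ∧ x ∈ F2 w t ∧ ¬ G.Adj y0 x := by
        intro w hw x hx
        rw [hS2f] at hx
        obtain ⟨t, _, ht⟩ := Finset.mem_image.mp hx
        obtain ⟨h1, h2⟩ := hp2 w (hSfP w hw).2.2 t
        exact ⟨t, ht, ht ▸ h1, ht ▸ h2⟩
      have hyr0 : y0 ∈ Zs r := zs_chain Zs r hmono (by omega) (by omega) hy0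
      have hyr1 : y1 ∈ Zs r := zs_chain Zs r hmono (by omega) (by omega) hy1
      refine ⟨y0, y1, Sf, S1f, S2f, hyr0, hyr1, hadj, ?_, ?_⟩
      · refine ⟨hadj, hScard, ?_, ?_, ?_, ?_, ?_, ?_, ?_, ?_, ?_, ?_, ?_⟩
        · intro h
          exact (hsub ((hSfP y0 h).1)).2 hy0
        · intro h
          exact (hsub ((hSfP y1 h).1)).2 hy1
        · -- card1
          intro w hw
          have hinj : Set.InjOn (p1 w) ↑(Finset.univ : Finset (Fin g)) := by
            intro t _ s _ hEq
            by_contra hts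
            have h1 := (hp1 w (hSfP w hw).2.1 t).1
            have h2 := (hp1 w (hSfP w hw).2.1 s).1
            exact ((hF1 w (hSfP w hw).1).2 t s hts (p1 w t) h1) (hEq ▸ h2)
          rw [hS1f]
          rw [Finset.card_image_of_injOn hinj, Finset.card_univ, Fintype.card_fin]
        · -- card2
          intro w hw
          have hinj : Set.InjOn (p2 w) ↑(Finset.univ : Finset (Fin g)) := by
            intro t _ s _ hEq
            by_contra hts
            have h1 := (hp2 w (hSfP w hw).2.2 t).1
            have h2 := (hp2 w (hSfP w hw).2.2 s).1
            exact ((hF2 w (hSfP w hw).1).2 t s hts (p2 w t) h1) (hEq ▸ h2)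
          rw [hS2f]
          rw [Finset.card_image_of_injOn hinj, Finset.card_univ, Fintype.card_fin]
        · -- avoid1
          intro w hw x hx
          obtain ⟨t, hpt, hxF, hxn⟩ := hmem1 w hw x hx
          have hfacts := htow1 w (hSfP w hw).1 t x hxF
          refine ⟨fun hc => hfacts.2.2 ((hsub (hSfP x hc).1).1), ?_, ?_⟩
          · intro hc; exact hfacts.2.2 (by rw [hc]; exact hy0')
          · intro hc; exact hfacts.2.2 (by rw [hc]; exact hy1')
        · -- avoid2
          intro w hw x hx
          obtain ⟨t, hpt, hxF, hxn⟩ := hmem2 w hw x hx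
          have hfacts := htow2 w (hSfP w hw).1 t x hxF
          refine ⟨fun hc => hfacts.2.2 ((hsub (hSfP x hc).1).1), ?_, ?_⟩
          · intro hc; exact hfacts.2.2 (by rw [hc]; exact hy0')
          · intro hc; exact hfacts.2.2 (by rw [hc]; exact hy1')
        · -- disj11
          intro w hw w' hw' hne
          rw [Finset.disjoint_left]
          intro x hx hx'
          obtain ⟨t, _, hxF, _⟩ := hmem1 w hw x hx
          obtain ⟨t', _, hxF', _⟩ := hmem1 w' hw' x hx'
          exact hd11 w (hSfP w hw).1 w' (hSfP w' hw').1 hne t t' x hxF hxF'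
        · -- disj22
          intro w hw w' hw' hne
          rw [Finset.disjoint_left]
          intro x hx hx'
          obtain ⟨t, _, hxF, _⟩ := hmem2 w hw x hx
          obtain ⟨t', _, hxF', _⟩ := hmem2 w' hw' x hx'
          exact hd22 w (hSfP w hw).1 w' (hSfP w' hw').1 hne t t' x hxF hxF'
        · -- disj12
          intro w hw w' hw'
          rw [Finset.disjoint_left]
          intro x hx hx'
          obtain ⟨t, _, hxF, _⟩ := hmem1 w hw x hx
          obtain ⟨t', _, hxF', _⟩ := hmem2 w' hw' x hx'
          exact hd12 w (hSfP w hw).1 w' (hSfP w' hw').1 t t' x hxF hxF'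
        · -- adj1
          intro w hw x hx
          obtain ⟨t, hpt, hxF, hxn⟩ := hmem1 w hw x hx
          have hfacts := htow1 w (hSfP w hw).1 t x hxF
          exact ⟨hfacts.1.1.symm, hfacts.1.2.symm, fun hc => hxn hc.symm⟩
        · -- adj2
          intro w hw x hx
          obtain ⟨t, hpt, hxF, hxn⟩ := hmem2 w hw x hx
          have hfacts := htow2 w (hSfP w hw).1 t x hxF
          exact ⟨hfacts.1.1.symm, hfacts.1.2.symm, fun hc => hxn hc.symm⟩
      · -- crystalVerts ⊆ Zs r
        unfold crystalVerts
        refine Set.union_subset (Set.union_subset ?_ ?_) ?_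
        · intro x hx
          exact zs_chain Zs r hmono (by omega) (by omega) (hsub ((hSfP x hx).1)).1
        · refine Set.iUnion₂_subset ?_
          intro w hw x hx
          obtain ⟨t, _, hxF, _⟩ := hmem1 w hw x hx
          exact (htow1 w (hSfP w hw).1 t x hxF).2.1
        · refine Set.iUnion₂_subset ?_
          intro w hw x hx
          obtain ⟨t, _, hxF, _⟩ := hmem2 w hw x hx
          exact (htow2 w (hSfP w hw).1 t x hxF).2.1
    · -- ===== towers case =====
      right
      have hPsub : P ⊆ Af := Finset.filter_subset _ _
      have hQ : g ≤ (Af \ P).card := by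
        rw [Finset.card_sdiff_of_subset hPsub, hAf]
        have := Finset.card_filter_le Af (fun w => Poor1 w ∧ Poor2 w)
        omega
      obtain ⟨Gd, hGdsub, hGdcard⟩ := Finset.exists_subset_card_eq hQ
      have e := Gd.equivFinOfCardEq hGdcard
      have hGdA : ∀ w ∈ Gd, w ∈ Γ (j + 1) s(y0, y1) ∧ ¬(Poor1 w ∧ Poor2 w) := by
        intro w hw
        have hmem := hGdsub hw
        rw [Finset.mem_sdiff] at hmem
        refine ⟨(hAfmem w).mp hmem.1, fun hc => hmem.2 ?_⟩
        rw [hPdef, Finset.mem_filter]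
        exact ⟨hmem.1, hc⟩
      have hch : ∀ w, ∃ C : List V, (w ∈ Γ (j + 1) s(y0, y1) ∧ ¬(Poor1 w ∧ Poor2 w)) →
          (IsTw G Γ j y0 y1 (w :: C) ∧ (w :: C).length = k + 1) := by
        intro w
        by_cases hw : w ∈ Γ (j + 1) s(y0, y1) ∧ ¬(Poor1 w ∧ Poor2 w)
        · obtain ⟨hwA', hnp⟩ := hw
          by_cases h1 : Poor1 w
          · have h2 : ¬ Poor2 w := fun h2 => hnp ⟨h1, h2⟩
            rw [hPoor2] at h2
            obtain ⟨t, ht⟩ := not_forall.mp h2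
            push_neg at ht
            refine ⟨F2 w t, fun _ => ⟨⟨hwA', Or.inr ⟨((hF2 w hwA').1 t).1, ht⟩⟩, ?_⟩⟩
            simp [List.length_cons, ((hF2 w hwA').1 t).2]
          · rw [hPoor1] at h1
            obtain ⟨t, ht⟩ := not_forall.mp h1
            push_neg at ht
            refine ⟨F1 w t, fun _ => ⟨⟨hwA', Or.inl ⟨((hF1 w hwA').1 t).1, ht⟩⟩, ?_⟩⟩
            simp [List.length_cons, ((hF1 w hwA').1 t).2]
        · exact ⟨[], fun hc => absurd hc hw⟩
      choose Cf hCf using hch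
      refine ⟨fun i => ((e.symm i : V) :: Cf (e.symm i : V)), ?_, ?_⟩
      · intro t
        exact hCf _ (hGdA _ (e.symm t).2)
      · -- pairwise disjointness of the final towers
        intro t s hts x hx hx'
        set w : V := (e.symm t : V) with hwdef
        set w' : V := (e.symm s : V) with hw'def
        have hww' : w ≠ w' := by
          intro hEq
          apply hts
          have : (e.symm t) = (e.symm s) := Subtype.ext hEq
          have := congrArg e this
          simpa using this
        obtain ⟨hwA', _⟩ := hGdA _ (e.symm t).2
        obtain ⟨hwA'', _⟩ := hGdA _ (e.symm s).2
        have htw := (hCf w (hGdA _ (e.symm t).2)).1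
        have htw' := (hCf w' (hGdA _ (e.symm s).2)).1
        have hlent := (hCf w (hGdA _ (e.symm t).2)).2
        have hlens := (hCf w' (hGdA _ (e.symm s).2)).2
        have hw1 : w ∈ Zs (j + 1) := (hsub hwA').1
        have hw1' : w' ∈ Zs (j + 1) := (hsub hwA'').1
        obtain ⟨ya, hya, ht⟩ := tw_tail htw
        obtain ⟨yb, hyb, ht'⟩ := tw_tail htw'
        have hlenC : (j + 1) + (Cf w).length ≤ r := by
          simp [List.length_cons] at hlent; omega
        have hlenC' : (j + 1) + (Cf w').length ≤ r := by
          simp [List.length_cons] at hlens; omega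
        have hyaz : ya ∈ Zs (j + 1) := by rcases hya with rfl | rfl <;> assumption
        have hybz : yb ∈ Zs (j + 1) := by rcases hyb with rfl | rfl <;> assumption
        have hyaj : ya ∈ Zs j := by rcases hya with rfl | rfl <;> assumption
        have hyaw : G.Adj ya w := by
          rcases hya with rfl | rfl
          · exact (hadjA w hwA').1
          · exact (hadjA w hwA').2
        have hybw : G.Adj yb w' := by
          rcases hyb with rfl | rfl
          · exact (hadjA w' hwA'').1
          · exact (hadjA w' hwA'').2
        have htail := tw_props G Zs Γ d r hmono hmain (Cf w) (j + 1) ya w hlenC hyaw hyaz hw1 ht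
        have htail' := tw_props G Zs Γ d r hmono hmain (Cf w') (j + 1) yb w' hlenC' hybw hybz hw1' ht'
        have hne2 : s(ya, w) ≠ s(yb, w') := by
          intro hEq
          rw [Sym2.eq_iff] at hEq
          rcases hEq with ⟨_, h2⟩ | ⟨h1, _⟩
          · exact hww' h2
          · exact (hsub hwA'').2 (show w' ∈ Zs j from by rw [← h1]; exact hyaj)
        rcases List.mem_cons.mp hx with hEq0 | hxcs <;> rcases List.mem_cons.mp hx' with hEq1 | hxcs'
        · exact hww' (hEq0.symm.trans hEq1)
        · exact (htail' x hxcs').2.2 (by rw [hEq0]; exact hw1)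
        · exact (htail x hxcs).2.2 (by rw [hEq1]; exact hw1')
        · exact tw_disj G Zs Γ d r hmono hmain hdisj (Cf w) (Cf w') (j + 1) ya w yb w'
            hlenC hlenC' hyaw hybw hyaz hw1 hybz hw1' hne2 ht ht' x hxcs hxcs'

/-- Theorem 4.2 (phantom-to-crystal): given a `(Z0, f+g, r)`-phantom on a 2-clique `Z0`,
either `G[Z_r]` contains an `(f, g)`-crystal, or there are `g` pairwise disjoint `r`-cliques
in `Z_r \ Z0` that `Z0` is complete to. -/
theorem stmt10 (f g : ℕ) (hf : 1 ≤ f) (hg : 1 ≤ g) (r : ℕ)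
    {V : Type} (G : SimpleGraph V)
    (Z0 : Set V) (hZ0clique : G.IsClique Z0) (hZ0card : Z0.ncard = 2)
    (Zs : ℕ → Set V) (Γ : ℕ → Sym2 V → Set V)
    (hp : IsPhantom G Z0 (f + g) r Zs Γ) :
    (∃ (z1 z2 : V) (S : Finset V) (S1 S2 : V → Finset V),
      z1 ∈ Zs r ∧ z2 ∈ Zs r ∧ G.Adj z1 z2 ∧
      IsCrystalIn G z1 z2 f g S S1 S2 ∧ crystalVerts S S1 S2 ⊆ Zs r) ∨
    (∃ K : Fin g → Finset V,
      (∀ i, (K i).card = r) ∧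
      (∀ i, G.IsClique ((K i : Finset V) : Set V)) ∧
      (∀ i, ((K i : Finset V) : Set V) ⊆ Zs r \ Z0) ∧
      (∀ i j, i ≠ j → Disjoint (K i) (K j)) ∧
      (∀ z0 ∈ Z0, ∀ i, ∀ v ∈ K i, G.Adj z0 v)) := by
  classical
  obtain ⟨hZ0, hmono, hmain, hdisj⟩ := hp
  obtain ⟨z1, z2, hne, hZ0eq⟩ := Set.ncard_eq_two.mp hZ0card
  have hz1 : z1 ∈ Z0 := by rw [hZ0eq]; exact Set.mem_insert _ _
  have hz2 : z2 ∈ Z0 := by rw [hZ0eq]; exact Set.mem_insert_of_mem _ rfl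
  have hadj : G.Adj z1 z2 := hZ0clique hz1 hz2 hne
  have hz1' : z1 ∈ Zs 0 := by rw [hZ0]; exact hz1
  have hz2' : z2 ∈ Zs 0 := by rw [hZ0]; exact hz2
  rcases tw_main G Zs Γ (f + g) r hmono hmain hdisj f g hf hg rfl r 0 (by omega)
      z1 z2 hadj hz1' hz2' with hcr | ⟨T, hT1, hT2⟩
  · exact Or.inl hcr
  · right
    have hside : ∀ t : Fin g, ∀ x ∈ T t,
        (G.Adj z1 x ∧ G.Adj z2 x) ∧ x ∈ Zs r ∧ x ∉ Zs 0 := by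
      intro t
      exact tw_props G Zs Γ (f + g) r hmono hmain (T t) 0 z1 z2
        (by rw [(hT1 t).2]; omega) hadj hz1' hz2' (hT1 t).1
    refine ⟨fun t => (T t).toFinset, ?_, ?_, ?_, ?_, ?_⟩
    · intro t
      rw [List.toFinset_card_of_nodup
        (tw_nodup G Zs Γ (f + g) r hmono hmain (T t) 0 z1 z2
          (by rw [(hT1 t).2]; omega) hadj hz1' hz2' (hT1 t).1)]
      exact (hT1 t).2
    · intro t
      intro x hx y hy hxy
      rw [Finset.mem_coe, List.mem_toFinset] at hx hy
      exact tw_clique G Zs Γ (f + g) r hmono hmain (T t) 0 z1 z2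
        (by rw [(hT1 t).2]; omega) hadj hz1' hz2' (hT1 t).1 x hx y hy hxy
    · intro t x hx
      rw [Finset.mem_coe, List.mem_toFinset] at hx
      have := hside t x hx
      exact ⟨this.2.1, by rw [← hZ0]; exact this.2.2⟩
    · intro t s hts
      rw [Finset.disjoint_left]
      intro x hx hx'
      rw [List.mem_toFinset] at hx hx'
      exact hT2 t s hts x hx hx'
    · intro z0 hz0 t v hv
      rw [List.mem_toFinset] at hv
      have := (hside t v hv).1
      rw [hZ0eq] at hz0
      rcases hz0 with h | h
      · rw [h]; exact this.1
      · rw [Set.mem_singleton_iff] at h; rw [h]; exact this.2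
end Phantom
end

section
/- For all integers c,s≥1, every directed graph D on at least c^(c^s) vertices contains either c distinct vertices v_1,…,v_c such that (v_i,v_j) is an arc of D whenever 1≤i<j≤c (an acyclic tournament on c vertices), or s distinct vertices no two of which are joined by an arc of D in either direction (a stable set of cardinality s). -/
/-- Key combinatorial lemma: in a digraph where every vertex of `W` has at most `m`
"non-neighbours" within `W` (including itself), if `W` is large enough we can greedily
extract a list of `k` vertices pairwise related forwards by `D`. -/
private lemma tourn_aux {V : Type} [Fintype V] (D : V → V → Prop) [DecidableRel D] (m : ℕ) (hm : 1 ≤ m) :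
    ∀ (k : ℕ) (W : Finset V),
      (∀ v ∈ W, (W.filter fun u => ¬ D v u ∧ ¬ D u v).card ≤ m) →
      m * 2 ^ k ≤ W.card + m →
      ∃ l : List V, l.length = k ∧ (∀ u ∈ l, u ∈ W) ∧ l.Pairwise D := by
  classical
  intro k
  induction k with
  | zero => intro W _ _; exact ⟨[], rfl, by simp, List.Pairwise.nil⟩
  | succ k ih =>
    intro W hW hcard
    have h2k : 2 ≤ 2 ^ (k + 1) := by
      calc 2 = 2 ^ 1 := rfl
        _ ≤ 2 ^ (k + 1) := Nat.pow_le_pow_right (by norm_num) (by omega)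
    have hWne : W.Nonempty := by
      rw [← Finset.card_pos]
      have := Nat.mul_le_mul_left m h2k
      omega
    obtain ⟨v, hv⟩ := hWne
    set O := W.filter (fun u => D v u) with hOdef
    set I := W.filter (fun u => ¬ D v u ∧ D u v) with hIdef
    have hcover : W ⊆ O ∪ I ∪ W.filter (fun u => ¬ D v u ∧ ¬ D u v) := by
      intro u hu
      simp only [Finset.mem_union, hOdef, hIdef, Finset.mem_filter]
      by_cases h1 : D v u
      · exact Or.inl (Or.inl ⟨hu, h1⟩)
      by_cases h2 : D u v
      · exact Or.inl (Or.inr ⟨hu, h1, h2⟩)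
      · exact Or.inr ⟨hu, h1, h2⟩
    have hWc : W.card ≤ O.card + I.card + m := by
      have h1 := Finset.card_le_card hcover
      have h3 := Finset.card_union_le (O ∪ I) (W.filter (fun u => ¬ D v u ∧ ¬ D u v))
      have h4 := Finset.card_union_le O I
      have h5 := hW v hv
      omega
    have hsplit : m * 2 ^ k ≤ O.card + m ∨ m * 2 ^ k ≤ I.card + m := by
      have : m * 2 ^ (k + 1) = m * 2 ^ k + m * 2 ^ k := by ring
      omega
    have htrans : ∀ (X : Finset V), X ⊆ W →
        ∀ v' ∈ X, (X.filter fun u => ¬ D v' u ∧ ¬ D u v').card ≤ m := by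
      intro X hX v' hv'
      calc (X.filter fun u => ¬ D v' u ∧ ¬ D u v').card
          ≤ (W.filter fun u => ¬ D v' u ∧ ¬ D u v').card :=
            Finset.card_le_card (Finset.filter_subset_filter _ hX)
        _ ≤ m := hW v' (hX hv')
    rcases hsplit with h | h
    · obtain ⟨l, hl, hmem, hpw⟩ := ih O (htrans O (Finset.filter_subset _ _)) h
      refine ⟨v :: l, by simp [hl], ?_, ?_⟩
      · intro u hu
        rcases List.mem_cons.mp hu with rfl | hu
        · exact hv
        · exact Finset.filter_subset _ _ (hmem u hu)
      · exact List.Pairwise.cons (fun u hu => (Finset.mem_filter.mp (hmem u hu)).2) hpw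
    · obtain ⟨l, hl, hmem, hpw⟩ := ih I (htrans I (Finset.filter_subset _ _)) h
      refine ⟨l ++ [v], by simp [hl], ?_, ?_⟩
      · intro u hu
        rcases List.mem_append.mp hu with hu | hu
        · exact Finset.filter_subset _ _ (hmem u hu)
        · simp only [List.mem_singleton] at hu; subst hu; exact hv
      · refine List.pairwise_append.mpr ⟨hpw, List.pairwise_singleton _ _, ?_⟩
        intro x hx y hy
        simp only [List.mem_singleton] at hy; subst hy
        exact (Finset.mem_filter.mp (hmem x hx)).2.2

private lemma main_aux (c : ℕ) (hc : 1 ≤ c) :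
    ∀ (s : ℕ), 1 ≤ s → ∀ (V : Type) [Fintype V] (D : V → V → Prop),
      (∀ v : V, ¬ D v v) → c ^ c ^ s ≤ Fintype.card V →
      (∃ f : Fin c ↪ V, ∀ i j : Fin c, i < j → D (f i) (f j)) ∨
      (∃ S : Finset V, S.card = s ∧ ∀ u ∈ S, ∀ v ∈ S, ¬ D u v) := by
  intro s
  induction s with
  | zero => intro h; omega
  | succ n ih =>
    intro _ V _ D hirr hcard
    classical
    haveI : DecidableRel D := Classical.decRel D
    rcases Nat.eq_zero_or_pos n with rfl | hn
    · -- base case s = 1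
      have h1 : 1 ≤ c ^ c ^ (0 + 1) := Nat.one_le_pow _ _ (by omega)
      have hne : Nonempty V := Fintype.card_pos_iff.mp (by omega)
      obtain ⟨v⟩ := hne
      right
      refine ⟨{v}, Finset.card_singleton v, ?_⟩
      intro u hu w hw
      simp only [Finset.mem_singleton] at hu hw
      subst hu; subst hw
      exact hirr _
    · set m := c ^ c ^ n with hmdef
      have hm1 : 1 ≤ m := Nat.one_le_pow _ _ (by omega)
      by_cases hx : ∃ v : V, m + 1 ≤ (Finset.univ.filter fun u => ¬ D v u ∧ ¬ D u v).card
      · -- a vertex with a large non-neighbourhood: recurse for a stable set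
        obtain ⟨v, hvc⟩ := hx
        set A := (Finset.univ.filter fun u => ¬ D v u ∧ ¬ D u v).erase v with hAdef
        have hvmem : v ∈ Finset.univ.filter fun u => ¬ D v u ∧ ¬ D u v := by
          simp [hirr v]
        have hA' : ∀ x : V, x ∈ A → ¬ D v x ∧ ¬ D x v := fun x hx =>
          (Finset.mem_filter.mp (Finset.mem_of_mem_erase hx)).2
        have hAcard : m ≤ A.card := by
          rw [hAdef, Finset.card_erase_of_mem hvmem]; omega
        have hcardA : c ^ c ^ n ≤ Fintype.card {x : V // x ∈ A} := by
          rwa [Fintype.card_coe]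
        have hres := ih hn {x : V // x ∈ A} (fun a b => D a.1 b.1) (fun a => hirr a.1) hcardA
        rcases hres with ⟨f, hf⟩ | ⟨S, hScard, hSst⟩
        · left
          exact ⟨f.trans (Function.Embedding.subtype _), fun i j hij => hf i j hij⟩
        · right
          have hvnot : v ∉ S.map (Function.Embedding.subtype _) := by
            simp only [Finset.mem_map]
            rintro ⟨b, -, hbv⟩
            have hbv' : (b : V) = v := hbv
            have hb : (b : V) ∈ (Finset.univ.filter fun u => ¬ D v u ∧ ¬ D u v).erase v := b.2
            exact (Finset.mem_erase.mp hb).1 hbv'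
          refine ⟨insert v (S.map (Function.Embedding.subtype _)), ?_, ?_⟩
          · rw [Finset.card_insert_of_notMem hvnot, Finset.card_map, hScard]
          · intro u hu w hw
            rcases Finset.mem_insert.mp hu with hu' | hu' <;>
              rcases Finset.mem_insert.mp hw with hw' | hw'
            · rw [hu', hw']; exact hirr v
            · rw [hu']
              obtain ⟨b, -, rfl⟩ := Finset.mem_map.mp hw'
              exact (hA' b.1 b.2).1
            · rw [hw']
              obtain ⟨b, -, rfl⟩ := Finset.mem_map.mp hu'
              exact (hA' b.1 b.2).2
            · obtain ⟨b, hb, rfl⟩ := Finset.mem_map.mp hu'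
              obtain ⟨b', hb', rfl⟩ := Finset.mem_map.mp hw'
              exact hSst b hb b' hb'
      · -- all non-neighbourhoods small: extract a transitive tournament
        push_neg at hx
        have hWhyp : ∀ v ∈ (Finset.univ : Finset V),
            ((Finset.univ : Finset V).filter fun u => ¬ D v u ∧ ¬ D u v).card ≤ m :=
          fun v _ => by have := hx v; omega
        have hmc : m ^ c = c ^ c ^ (n + 1) := by
          rw [hmdef, ← pow_mul, ← pow_succ]
        have key : m * 2 ^ c ≤ m ^ c + m := by
          rcases Nat.lt_or_ge c 2 with hc2 | hc2
          · have hc1 : c = 1 := by omega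
            subst hc1
            simp; omega
          · have hcn2 : 2 ≤ c ^ n := by
              calc 2 ≤ c := hc2
                _ ≤ c ^ n := Nat.le_self_pow (by omega) c
            have hm4 : 4 ≤ m := by
              rw [hmdef]
              calc 4 = 2 ^ 2 := by norm_num
                _ ≤ 2 ^ c ^ n := Nat.pow_le_pow_right (by norm_num) hcn2
                _ ≤ c ^ c ^ n := Nat.pow_le_pow_left hc2 _
            have h2c : 2 ^ c ≤ m ^ (c - 1) := by
              calc 2 ^ c ≤ 2 ^ (2 * (c - 1)) := Nat.pow_le_pow_right (by norm_num) (by omega)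
                _ = 4 ^ (c - 1) := by rw [pow_mul]; norm_num
                _ ≤ m ^ (c - 1) := Nat.pow_le_pow_left hm4 _
            calc m * 2 ^ c ≤ m * m ^ (c - 1) := Nat.mul_le_mul_left m h2c
              _ = m ^ c := by rw [← pow_succ']; congr 1; omega
              _ ≤ m ^ c + m := Nat.le_add_right _ _
        have hnum : m * 2 ^ c ≤ (Finset.univ : Finset V).card + m := by
          rw [Finset.card_univ]
          rw [hmc] at key
          omega
        obtain ⟨l, hl, -, hpw⟩ := tourn_aux D m hm1 c Finset.univ hWhyp hnum
        left
        have hnd : l.Nodup := hpw.imp (fun {a b} h => by rintro rfl; exact hirr _ h)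
        have hget : Function.Injective l.get := List.nodup_iff_injective_get.mp hnd
        refine ⟨⟨fun i => l.get (Fin.cast hl.symm i), ?_⟩, ?_⟩
        · intro i j h
          have h2 := hget h
          rw [Fin.ext_iff, Fin.coe_cast, Fin.coe_cast] at h2
          exact Fin.ext h2
        · intro i j hij
          exact List.pairwise_iff_get.mp hpw _ _ (show (i : ℕ) < (j : ℕ) from hij)

/-- Ramsey for digraphs: every digraph on at least `c ^ (c ^ s)` vertices contains either an
acyclic tournament on `c` vertices or a stable set of cardinality `s`.  A digraph is given by
an irreflexive arc relation `D` (arcs are ordered pairs of distinct vertices). -/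
theorem stmt13 (c s : ℕ) (hc : 1 ≤ c) (hs : 1 ≤ s)
    {V : Type} [Fintype V] (D : V → V → Prop) (hirr : ∀ v : V, ¬ D v v)
    (hcard : c ^ c ^ s ≤ Fintype.card V) :
    (∃ f : Fin c ↪ V, ∀ i j : Fin c, i < j → D (f i) (f j)) ∨
    (∃ S : Finset V, S.card = s ∧ ∀ u ∈ S, ∀ v ∈ S, ¬ D u v) := by
  exact main_aux c hc s hs V D hirr hcard
end

section
/- For all integers g,s,t≥1 there exists an integer N≥1 with the following property: if G is a (K_{s,s},K_t)-free graph and A,B⊆V(G) are disjoint sets each of cardinality N, then there exist stable sets S1⊆A and S2⊆B, each of cardinality g, such that S1 is anticomplete to S2. -/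
/-!
Ramsey's theorem turns `K_t`-freeness into large stable sets `SA ⊆ A` and `SB ⊆ B`. Pigeonholing
the vertices of `SB` by their neighbourhoods in a `2k`-subset of `SA` gives `k` vertices of `SB`
with a common trace `T` there; then `T` or its complement yields `k`-sets `X ⊆ SA`, `Y ⊆ SB` that
are complete or anticomplete to each other. For `k ≥ s` they cannot be complete, since two stable
`s`-sets complete to each other induce `K_{s,s}`.
-/

open Finset

namespace SimpleGraph

theorem exists_isNClique_or_isNIndepSet (a b : ℕ) :
    ∃ n, ∀ {V : Type*} (G : SimpleGraph V) (A : Finset V), n ≤ #A →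
      (∃ C ⊆ A, G.IsNClique a C) ∨ ∃ S ⊆ A, G.IsNIndepSet b S := by
  induction a generalizing b with
  | zero => exact ⟨0, fun G A _ => .inl ⟨∅, empty_subset _, by simp⟩⟩
  | succ a iha =>
    induction b with
    | zero => exact ⟨0, fun G A _ => .inr ⟨∅, empty_subset _, by simp [isNIndepSet_iff]⟩⟩
    | succ b ihb =>
      obtain ⟨n₁, hn₁⟩ := iha (b + 1)
      obtain ⟨n₂, hn₂⟩ := ihb
      refine ⟨n₁ + n₂ + 1, fun {V} G A hA => ?_⟩
      classical
      obtain ⟨v, hv⟩ : A.Nonempty := card_pos.mp (by omega)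
      set N := (A.erase v).filter (G.Adj v)
      set M := (A.erase v).filter (¬G.Adj v ·)
      have hNM : #N + #M = #A - 1 := by
        rw [card_filter_add_card_filter_not, card_erase_of_mem hv]
      have hNA : N ⊆ A := (filter_subset _ _).trans (erase_subset _ _)
      have hMA : M ⊆ A := (filter_subset _ _).trans (erase_subset _ _)
      by_cases hN : n₁ ≤ #N
      · obtain ⟨C, hCN, hC⟩ | ⟨S, hSN, hS⟩ := hn₁ G N hN
        · refine .inl ⟨insert v C, insert_subset hv (hCN.trans hNA), hC.insert fun u hu => ?_⟩
          exact (mem_filter.mp (hCN hu)).2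
        · exact .inr ⟨S, hSN.trans hNA, hS⟩
      · obtain ⟨C, hCM, hC⟩ | ⟨S, hSM, hS⟩ := hn₂ G M (by omega)
        · exact .inl ⟨C, hCM.trans hMA, hC⟩
        · refine .inr ⟨insert v S, insert_subset hv (hSM.trans hMA), ?_⟩
          rw [← isNClique_compl] at hS ⊢
          refine hS.insert fun u hu => ?_
          obtain ⟨hu, hvu⟩ := mem_filter.mp (hSM hu)
          exact (compl_adj G v u).mpr ⟨(ne_of_mem_erase hu).symm, hvu⟩

theorem exists_isNIndepSet_of_cliqueFree (t m : ℕ) :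
    ∃ n, ∀ {V : Type*} (G : SimpleGraph V), G.CliqueFree t → ∀ A : Finset V, n ≤ #A →
      ∃ S ⊆ A, G.IsNIndepSet m S := by
  obtain ⟨n, hn⟩ := exists_isNClique_or_isNIndepSet t m
  refine ⟨n, fun G hG A hA => ?_⟩
  obtain ⟨C, -, hC⟩ | hS := hn G A hA
  · exact (hG C hC).elim
  · exact hS

variable {V : Type*} (G : SimpleGraph V)

theorem exists_subset_card_eq_forall_adj_iff (k : ℕ) (A B : Finset V) (hB : 2 ^ #A * k ≤ #B) :
    ∃ T ⊆ A, ∃ Y ⊆ B, #Y = k ∧ ∀ v ∈ Y, ∀ u ∈ A, G.Adj u v ↔ u ∈ T := by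
  classical
  have hmaps : ∀ v ∈ B, A.filter (G.Adj · v) ∈ A.powerset :=
    fun v _ => mem_powerset.mpr (filter_subset _ _)
  obtain ⟨T, hT, hfiber⟩ := exists_le_card_fiber_of_mul_le_card_of_maps_to hmaps
    (powerset_nonempty A) (by rwa [card_powerset])
  obtain ⟨Y, hYfiber, hY⟩ := exists_subset_card_eq hfiber
  refine ⟨T, mem_powerset.mp hT, Y, hYfiber.trans (filter_subset _ _), hY, fun v hv u hu => ?_⟩
  rw [← (mem_filter.mp (hYfiber hv)).2, mem_filter]
  exact (and_iff_right hu).symm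

theorem exists_isCompleteBetween_or_forall_not_adj (k : ℕ) (A B : Finset V) (hA : 2 * k ≤ #A)
    (hB : 2 ^ (2 * k) * k ≤ #B) :
    ∃ X ⊆ A, ∃ Y ⊆ B, #X = k ∧ #Y = k ∧
      (G.IsCompleteBetween X Y ∨ ∀ u ∈ X, ∀ v ∈ Y, ¬G.Adj u v) := by
  classical
  obtain ⟨A', hA'A, hA'⟩ := exists_subset_card_eq hA
  obtain ⟨T, hTA', Y, hYB, hY, hT⟩ :=
    G.exists_subset_card_eq_forall_adj_iff k A' B (by rwa [hA'])
  by_cases hTk : k ≤ #T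
  · obtain ⟨X, hXT, hX⟩ := exists_subset_card_eq hTk
    refine ⟨X, (hXT.trans hTA').trans hA'A, Y, hYB, hX, hY, .inl fun u hu v hv => ?_⟩
    exact (hT v hv u (hTA' (hXT hu))).mpr (hXT hu)
  · have hsdiff : k ≤ #(A' \ T) := by
      rw [card_sdiff_of_subset hTA']
      omega
    obtain ⟨X, hXT, hX⟩ := exists_subset_card_eq hsdiff
    refine ⟨X, (hXT.trans sdiff_subset).trans hA'A, Y, hYB, hX, hY, .inr fun u hu v hv => ?_⟩
    obtain ⟨huA', huT⟩ := mem_sdiff.mp (hXT hu)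
    exact fun huv => huT ((hT v hv u huA').mp huv)

theorem nonempty_completeBipartiteGraph_embedding {α β : Type*} [Fintype α] [Fintype β]
    {X Y : Finset V} (hX : G.IsIndepSet X) (hY : G.IsIndepSet Y)
    (hXY : G.IsCompleteBetween X Y) (hα : Fintype.card α ≤ #X) (hβ : Fintype.card β ≤ #Y) :
    Nonempty (completeBipartiteGraph α β ↪g G) := by
  obtain ⟨fα⟩ : Nonempty (α ↪ X) := Function.Embedding.nonempty_of_card_le (by simpa using hα)
  obtain ⟨fβ⟩ : Nonempty (β ↪ Y) := Function.Embedding.nonempty_of_card_le (by simpa using hβ)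
  let f : α ⊕ β → V := Sum.elim (fun a => fα a) (fun b => fβ b)
  have hf : f.Injective :=
    (Subtype.val_injective.comp fα.injective).sumElim (Subtype.val_injective.comp fβ.injective)
      fun a b => (hXY (fα a).2 (fβ b).2).ne
  refine ⟨⟨⟨f, hf⟩, ?_⟩⟩
  rintro (a | b) (a' | b')
  · exact iff_of_false (fun h => hX (fα a).2 (fα a').2 h.ne h) (by simp)
  · exact iff_of_true (hXY (fα a).2 (fβ b').2) (by simp)
  · exact iff_of_true (hXY (fα a').2 (fβ b).2).symm (by simp)
  · exact iff_of_false (fun h => hY (fβ b).2 (fβ b').2 h.ne h) (by simp)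

end SimpleGraph

theorem stmt14_general (g s t : ℕ) :
    ∃ N : ℕ, 1 ≤ N ∧ ∀ {V : Type} (G : SimpleGraph V),
      Free G (completeBipartiteGraph (Fin s) (Fin s)) →
      Free G (⊤ : SimpleGraph (Fin t)) →
      ∀ A B : Finset V, Disjoint A B → A.card = N → B.card = N →
      ∃ S1 S2 : Finset V, S1 ⊆ A ∧ S2 ⊆ B ∧ S1.card = g ∧ S2.card = g ∧
        (∀ u ∈ S1, ∀ v ∈ S1, ¬ G.Adj u v) ∧
        (∀ u ∈ S2, ∀ v ∈ S2, ¬ G.Adj u v) ∧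
        (∀ u ∈ S1, ∀ v ∈ S2, ¬ G.Adj u v) := by
  set k := max s g
  obtain ⟨n₁, hn₁⟩ := SimpleGraph.exists_isNIndepSet_of_cliqueFree t (2 * k)
  obtain ⟨n₂, hn₂⟩ := SimpleGraph.exists_isNIndepSet_of_cliqueFree t (2 ^ (2 * k) * k)
  refine ⟨max 1 (max n₁ n₂), le_max_left _ _, fun {V} G hKss hKt A B _ hA hB => ?_⟩
  have hG : G.CliqueFree t := by
    by_contra h
    exact hKt.false (G.topEmbeddingOfNotCliqueFree h)
  obtain ⟨SA, hSA, hSAi⟩ := hn₁ G hG A (by omega)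
  obtain ⟨SB, hSB, hSBi⟩ := hn₂ G hG B (by omega)
  obtain ⟨X, hXS, Y, hYS, hX, hY, hcomplete | hanti⟩ :=
    G.exists_isCompleteBetween_or_forall_not_adj k SA SB hSAi.card_eq.ge hSBi.card_eq.ge
  · obtain ⟨e⟩ : Nonempty (completeBipartiteGraph (Fin s) (Fin s) ↪g G) :=
      G.nonempty_completeBipartiteGraph_embedding
        (hSAi.isIndepSet.mono (coe_subset.mpr hXS)) (hSBi.isIndepSet.mono (coe_subset.mpr hYS))
        hcomplete (by simp [hX, k]) (by simp [hY, k])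
    exact (hKss.false e).elim
  obtain ⟨S1, hS1X, hS1⟩ := exists_subset_card_eq (show g ≤ #X by omega)
  obtain ⟨S2, hS2Y, hS2⟩ := exists_subset_card_eq (show g ≤ #Y by omega)
  refine ⟨S1, S2, (hS1X.trans hXS).trans hSA, (hS2Y.trans hYS).trans hSB, hS1, hS2,
    fun u hu v hv huv => ?_, fun u hu v hv huv => ?_,
    fun u hu v hv => hanti u (hS1X hu) v (hS2Y hv)⟩
  · exact hSAi.isIndepSet (hXS (hS1X hu)) (hXS (hS1X hv)) huv.ne huv
  · exact hSBi.isIndepSet (hYS (hS2Y hu)) (hYS (hS2Y hv)) huv.ne huv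

/-- For all `g, s, t ≥ 1` there is `N ≥ 1` such that in every `(K_{s,s}, K_t)`-free graph,
any two disjoint `N`-sets `A, B` contain stable `g`-sets `S1 ⊆ A`, `S2 ⊆ B` that are
anticomplete to each other. -/
theorem stmt14 (g s t : ℕ) (hg : 1 ≤ g) (hs : 1 ≤ s) (ht : 1 ≤ t) :
    ∃ N : ℕ, 1 ≤ N ∧ ∀ {V : Type} (G : SimpleGraph V),
      Free G (completeBipartiteGraph (Fin s) (Fin s)) →
      Free G (⊤ : SimpleGraph (Fin t)) →
      ∀ A B : Finset V, Disjoint A B → A.card = N → B.card = N →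
      ∃ S1 S2 : Finset V, S1 ⊆ A ∧ S2 ⊆ B ∧ S1.card = g ∧ S2.card = g ∧
        (∀ u ∈ S1, ∀ v ∈ S1, ¬ G.Adj u v) ∧
        (∀ u ∈ S2, ∀ v ∈ S2, ¬ G.Adj u v) ∧
        (∀ u ∈ S1, ∀ v ∈ S2, ¬ G.Adj u v) :=
  stmt14_general g s t
end

section
/- Let h,t≥1 be integers and let G be a (K_{2,2},K_t)-free graph. Let z∈V(G) and let Y⊆V(G)∖{z} with |Y|≤h and such that z has no neighbor in Y. Let K be the set of all neighbors of z that have at least one neighbor in Y. Then |K| < 2^h·t. -/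
/-!
Sort the neighbours `x` of `z` that see `Y` by their trace `N(x) ∩ Y`, a subset of `Y`. Two such
vertices with the same trace have a common neighbour `y ∈ Y`, which is distinct from `z` and not
adjacent to it; were they non-adjacent, they would induce a `C_4` together with `z` and `y`. So
each of the at most `2^h` classes is a clique and has fewer than `t` vertices.
-/

namespace SimpleGraph

variable {V : Type} {G : SimpleGraph V}

theorem CliqueFree.card_lt_of_isClique {t : ℕ} (hG : G.CliqueFree t) {s : Finset V}
    (hs : G.IsClique (s : Set V)) : s.card < t := by
  by_contra! hst
  obtain ⟨u, hus, hu⟩ := Finset.exists_subset_card_eq hst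
  exact hG u ⟨hs.subset (by exact_mod_cast hus), hu⟩

theorem cliqueFree_of_free_top {t : ℕ} (hG : _root_.Free G (⊤ : SimpleGraph (Fin t))) :
    G.CliqueFree t :=
  cliqueFree_iff.mpr ⟨fun c => hG.false c.topEmbedding⟩

theorem CliqueFree.card_lt_mul_of_isClique_fibers {β : Type} [DecidableEq β] {t : ℕ}
    (hG : G.CliqueFree t) {s : Finset V} {T : Finset β} (hT : T.Nonempty) {f : V → β}
    (hf : ∀ x ∈ s, f x ∈ T) (hfib : ∀ b ∈ T, G.IsClique ({x ∈ s | f x = b} : Set V)) :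
    s.card < T.card * t := by
  rw [Finset.card_eq_sum_card_fiberwise hf, ← smul_eq_mul, ← Finset.sum_const]
  refine Finset.sum_lt_sum_of_nonempty hT fun b hb => hG.card_lt_of_isClique ?_
  simpa using hfib b hb

theorem isClique_commonNeighbors
    (hK22 : _root_.Free G (completeBipartiteGraph (Fin 2) (Fin 2)))
    {z y : V} (hzy : z ≠ y) (hnzy : ¬ G.Adj z y) :
    G.IsClique (G.commonNeighbors z y) := by
  intro x hx x' hx' hxx'
  rw [mem_commonNeighbors] at hx hx'
  obtain ⟨hzx, hyx⟩ := hx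
  obtain ⟨hzx', hyx'⟩ := hx'
  by_contra hnxx'
  let φ : Fin 2 ⊕ Fin 2 → V := Sum.elim ![z, y] ![x, x']
  have hφ : Function.Injective φ := by
    rintro (a | a) (b | b) hab <;> fin_cases a <;> fin_cases b <;>
      simp_all [φ, G.ne_of_adj hzx, G.ne_of_adj hzx', G.ne_of_adj hyx, G.ne_of_adj hyx',
        (G.ne_of_adj hzx).symm, (G.ne_of_adj hzx').symm, (G.ne_of_adj hyx).symm,
        (G.ne_of_adj hyx').symm]
  have f : completeBipartiteGraph (Fin 2) (Fin 2) ↪g G := by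
    refine ⟨⟨φ, hφ⟩, ?_⟩
    rintro (a | a) (b | b) <;> fin_cases a <;> fin_cases b <;>
      simp [φ, completeBipartiteGraph, G.adj_comm, hzx, hzx', hyx, hyx', hnzy, hnxx']
  exact hK22.false f

end SimpleGraph

theorem stmt15_general (h t : ℕ)
    {V : Type} [Fintype V] (G : SimpleGraph V)
    (hK22 : Free G (completeBipartiteGraph (Fin 2) (Fin 2)))
    (hKt : Free G (⊤ : SimpleGraph (Fin t)))
    (z : V) (Y : Finset V) (hzY : z ∉ Y) (hYcard : Y.card ≤ h)
    (hnonadj : ∀ y ∈ Y, ¬ G.Adj z y) :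
    ({x : V | G.Adj z x ∧ ∃ y ∈ Y, G.Adj x y}).ncard < 2 ^ h * t := by
  classical
  let K : Finset V := {x | G.Adj z x ∧ ∃ y ∈ Y, G.Adj x y}
  let trace : V → Finset V := fun x => {y ∈ Y | G.Adj x y}
  have hfibre : ∀ S ∈ Y.powerset, G.IsClique ({x ∈ K | trace x = S} : Set V) := by
    rintro S - x hx x' hx' hne
    simp only [Set.mem_ofPred_eq, K, Finset.mem_filter, Finset.mem_univ, true_and] at hx hx'
    obtain ⟨⟨hzx, y, hy, hxy⟩, rfl⟩ := hx
    obtain ⟨⟨hzx', -⟩, hS⟩ := hx'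
    have hx'y : G.Adj x' y := by simpa [trace, hy, hxy] using congrArg (y ∈ ·) hS
    exact SimpleGraph.isClique_commonNeighbors hK22 (ne_of_mem_of_not_mem hy hzY).symm
      (hnonadj y hy) ⟨hzx, hxy.symm⟩ ⟨hzx', hx'y.symm⟩ hne
  calc ({x : V | G.Adj z x ∧ ∃ y ∈ Y, G.Adj x y}).ncard = K.card := by
        rw [← Set.ncard_coe_finset]; simp [K]
    _ < Y.powerset.card * t :=
        (SimpleGraph.cliqueFree_of_free_top hKt).card_lt_mul_of_isClique_fibers
          Y.powerset_nonempty (fun x _ => Finset.mem_powerset.mpr (Finset.filter_subset _ _))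
          hfibre
    _ ≤ 2 ^ h * t := by
        rw [Finset.card_powerset]
        gcongr
        norm_num

/-- Claim (4.2) in the paper: in a `(K_{2,2}, K_t)`-free graph, if `z` has no neighbor in a
set `Y` of at most `h` vertices (with `z ∉ Y`), then fewer than `2^h · t` neighbors of `z`
have a neighbor in `Y`. -/
theorem stmt15 (h t : ℕ) (hh : 1 ≤ h) (ht : 1 ≤ t)
    {V : Type} [Fintype V] (G : SimpleGraph V)
    (hK22 : Free G (completeBipartiteGraph (Fin 2) (Fin 2)))
    (hKt : Free G (⊤ : SimpleGraph (Fin t)))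
    (z : V) (Y : Finset V) (hzY : z ∉ Y) (hYcard : Y.card ≤ h)
    (hnonadj : ∀ y ∈ Y, ¬ G.Adj z y) :
    ({x : V | G.Adj z x ∧ ∃ y ∈ Y, G.Adj x y}).ncard < 2 ^ h * t :=
  stmt15_general h t G hK22 hKt z Y hzY hYcard hnonadj
end

section
/- For every graph F, the graph cone(F) is a 2-forest if and only if F is a forest. -/
/-- A 2-forest: a `K₄`-free chordal graph. -/
def TwoForest {W : Type} (H : SimpleGraph W) : Prop :=
  Chordal H ∧ Free H (⊤ : SimpleGraph (Fin 4))

/-!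
If `F` has a cycle, a shortest one is chordless (a chord would split it into a shorter cycle), so
it is an induced cycle of `F` and hence of `cone F`: a triangle together with the apex is a `K₄`,
and a longer one is a hole. Conversely, let `F` be a forest. A `K₄` of `cone F` contains a
triangle of `F`. An induced cycle of length at least four in `cone F` avoids the apex, which is
adjacent to every other vertex, so it is a cycle of `F`.
-/

namespace SimpleGraph

variable {V : Type*} {G : SimpleGraph V}

lemma isEmpty_top_embedding_iff_cliqueFree {n : ℕ} :
    IsEmpty ((⊤ : SimpleGraph (Fin n)) ↪g G) ↔ G.CliqueFree n := by
  rw [← not_iff_not, not_isEmpty_iff, ← IsIndContained, top_isIndContained_iff_top_isContained,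
    not_cliqueFree_iff_top_isContained]

lemma cycleGraph_adj_iff_eq_add_one {n : ℕ} [NeZero n] (hn : 2 ≤ n) {i j : Fin n} :
    (cycleGraph n).Adj i j ↔ j = i + 1 ∨ i = j + 1 := by
  obtain ⟨m, rfl⟩ : ∃ m, n = m + 2 := ⟨n - 2, by omega⟩
  rw [cycleGraph_adj, sub_eq_iff_eq_add, sub_eq_iff_eq_add, add_comm 1, add_comm 1, or_comm]

lemma cycleGraph_exists_not_adj {n : ℕ} (hn : 4 ≤ n) (i : Fin n) :
    ∃ j, j ≠ i ∧ ¬ (cycleGraph n).Adj i j := by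
  obtain ⟨m, rfl⟩ : ∃ m, n = m + 4 := ⟨n - 4, by omega⟩
  refine ⟨i + 2, ?_, ?_⟩
  · simp [Fin.ext_iff, Nat.mod_eq_of_lt]
  · rw [cycleGraph_adj_iff_eq_add_one (by omega), add_assoc, add_right_inj, left_eq_add]
    simp [Fin.ext_iff, Fin.val_add, Nat.mod_eq_of_lt]

namespace Walk

variable {u : V}

lemma IsCycle.exists_isCycle_length_lt_of_not_isChordless {c : G.Walk u u} (hc : c.IsCycle)
    (hchord : ¬ c.IsChordless) : ∃ (v : V) (d : G.Walk v v), d.IsCycle ∧ d.length < c.length := by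
  classical
  obtain ⟨x, y, hx, hy, hxy, hnot⟩ : ∃ x y, x ∈ c.support ∧ y ∈ c.support ∧ G.Adj x y ∧
      s(x, y) ∉ c.edges := by
    simpa [isChordless_iff_forall_mem_edges] using hchord
  have hy' : y ∈ (c.rotate x hx).support := (mem_support_rotate_iff ..).mpr hy
  have hnot' : s(x, y) ∉ (c.rotate x hx).edges := fun h =>
    hnot ((rotate_edges ..).perm.mem_iff.mp h)
  obtain ⟨p, q, hpq, hp_sub, hq_sub⟩ : ∃ (p : G.Walk x y) (q : G.Walk y x),
      p.append q = c.rotate x hx ∧ p.edges ⊆ (c.rotate x hx).edges ∧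
        q.edges ⊆ (c.rotate x hx).edges :=
    ⟨_, _, take_spec _ hy', edges_takeUntil_subset_edges _ hy', edges_dropUntil_subset_edges _ hy'⟩
  have hc' : (p.append q).IsCycle := hpq ▸ hc.rotate hx
  have hp : p.IsPath := hc'.isPath_of_append_left (not_nil_of_ne hxy.ne')
  have hq : q.IsPath := hc'.isPath_of_append_right (not_nil_of_ne hxy.ne)
  have hlen : p.length + q.length = c.length := by
    rw [← length_append, hpq, length_rotate]
  have hxy_mem : s(x, y) ∈ hxy.toWalk.edges := by simp
  -- each arc closes up with the chord into a cycle of length at most `arc + 1`, and one of the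
  -- two arcs has length at least two
  obtain ⟨v, -, -, d, hd, hdp⟩ := hp.exists_isCycle_length_le_add_of_ne hxy.isPath_toWalk
    fun h => hnot' (hp_sub (h ▸ hxy_mem))
  obtain ⟨w, -, -, e, he, heq⟩ := hq.reverse.exists_isCycle_length_le_add_of_ne hxy.isPath_toWalk
    fun h => hnot' (hq_sub (by rw [← List.mem_reverse, ← edges_reverse, h]; exact hxy_mem))
  have := hc.three_le_length
  simp only [Adj.length_toWalk, length_reverse] at hdp heq
  by_cases h2 : 2 ≤ p.length
  · exact ⟨w, e, he, by omega⟩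
  · exact ⟨v, d, hd, by omega⟩

lemma IsCycle.getVert_val_add_one {c : G.Walk u u} (hc : c.IsCycle) [NeZero c.length]
    (i : Fin c.length) : c.getVert ↑(i + 1) = c.getVert (↑i + 1) := by
  have := hc.three_le_length
  rcases Nat.lt_or_ge (i + 1) c.length with hi | hi
  · rw [Fin.val_add_one_of_lt' hi]
  · replace hi : i + 1 = c.length := by omega
    rw [Fin.val_add, Fin.val_one', Nat.one_mod_eq_one.mpr (by omega), hi, Nat.mod_self,
      getVert_zero, getVert_length]

lemma IsCycle.cycleGraph_isIndContained {c : G.Walk u u} (hc : c.IsCycle)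
    (hch : c.IsChordless) : cycleGraph c.length ⊴ G := by
  have h3 := hc.three_le_length
  have : NeZero c.length := ⟨by omega⟩
  let f : Fin c.length → V := fun i => c.getVert i
  have hf : Function.Injective f := fun i j h =>
    Fin.ext (hc.getVert_injOn' (by simp; omega) (by simp; omega) h)
  refine ⟨⟨⟨f, hf⟩, fun {i j} => ?_⟩⟩
  change G.Adj (f i) (f j) ↔ _
  rw [cycleGraph_adj_iff_eq_add_one (by omega)]
  constructor
  · intro h
    obtain ⟨k, hk, hkij⟩ := (mk_mem_edges_iff_exists c).mp
      (hch.mem_edges (c.getVert_mem_support i) (c.getVert_mem_support j) h)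
    rw [show k = (⟨k, hk⟩ : Fin c.length).val from rfl, ← hc.getVert_val_add_one] at hkij
    rcases Sym2.eq_iff.mp hkij with ⟨h1, h2⟩ | ⟨h1, h2⟩
    · left; rw [← hf h1, hf h2]
    · right; rw [← hf h1, hf h2]
  · rintro (rfl | rfl)
    · simpa [f, hc.getVert_val_add_one] using c.adj_getVert_succ i.isLt
    · simpa [f, hc.getVert_val_add_one] using (c.adj_getVert_succ j.isLt).symm

end Walk

lemma exists_cycleGraph_isIndContained_of_not_isAcyclic (h : ¬ G.IsAcyclic) :
    ∃ n, 3 ≤ n ∧ cycleGraph n ⊴ G := by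
  obtain ⟨u, c, hc, hlen⟩ := exists_girth_eq_length.mpr h
  refine ⟨c.length, hc.three_le_length, hc.cycleGraph_isIndContained ?_⟩
  by_contra hch
  obtain ⟨v, d, hd, hlt⟩ := hc.exists_isCycle_length_lt_of_not_isChordless hch
  exact (girth_le_length hd).not_gt (hlen ▸ hlt)

end SimpleGraph

section Cone

open SimpleGraph

variable {V W : Type} {F : SimpleGraph V}

@[simp]
lemma cone_adj_some_some {a b : V} : (cone F).Adj (some a) (some b) ↔ F.Adj a b := by
  simpa [cone, F.adj_comm b a] using fun h : F.Adj a b => h.ne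

@[simp]
lemma cone_adj_none_some {a : V} : (cone F).Adj none (some a) := by
  simp [cone]

lemma isIndContained_cone : F ⊴ cone F :=
  ⟨⟨Function.Embedding.some, cone_adj_some_some⟩⟩

lemma cliqueFree_cone_succ_iff {n : ℕ} : (cone F).CliqueFree (n + 1) ↔ F.CliqueFree n := by
  classical
  constructor
  · intro h s hs
    refine h (insert none (s.map .some)) ((hs.map.mono ?_).insert (by simp))
    exact (map_le_iff_le_comap _ _ _).mpr fun a b hab => by simpa using hab
  · intro h t ht
    have hclique : F.IsClique (t.eraseNone : Set V) := fun a ha b hb hab =>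
      cone_adj_some_some.mp (ht.isClique (Finset.mem_eraseNone.mp ha)
        (Finset.mem_eraseNone.mp hb) (by simpa using hab))
    have hcard : n ≤ t.eraseNone.card := by
      have hsub : t ⊆ insert none (t.eraseNone.map .some) := fun x hx => by
        cases x <;> simp [hx]
      have := (Finset.card_le_card hsub).trans (Finset.card_insert_le _ _)
      rw [ht.card_eq, Finset.card_map] at this
      omega
    exact h.mono hcard _ ⟨hclique, rfl⟩

lemma isIndContained_of_isIndContained_cone {H : SimpleGraph W}
    (hH : ∀ x, ∃ y, y ≠ x ∧ ¬ H.Adj x y) : H ⊴ cone F → H ⊴ F := by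
  rintro ⟨e⟩
  have hsome : ∀ x, ∃ a, e x = some a := by
    intro x
    obtain ⟨y, hyx, hxy⟩ := hH x
    match hx : e x, hy : e y with
    | some a, _ => exact ⟨a, rfl⟩
    | none, none => exact absurd (e.injective (hy.trans hx.symm)) hyx
    | none, some b => exact absurd (e.map_adj_iff.mp (by rw [hx, hy]; exact cone_adj_none_some)) hxy
  choose f hf using hsome
  refine ⟨⟨⟨f, fun x y h => e.injective (by rw [hf, hf, h])⟩, fun {x y} => ?_⟩⟩
  change F.Adj (f x) (f y) ↔ _
  rw [← cone_adj_some_some, ← hf, ← hf, e.map_adj_iff]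

end Cone

/-- For every graph `F`, `cone F` is a 2-forest if and only if `F` is a forest. -/
theorem stmt16 {W : Type} (F : SimpleGraph W) :
    TwoForest (cone F) ↔ F.IsAcyclic := by
  open SimpleGraph in
  refine ⟨fun ⟨hchordal, hK4⟩ => ?_, fun hF => ⟨fun n hn => ⟨fun e => ?_⟩, ?_⟩⟩
  · by_contra hcyc
    obtain ⟨n, hn, hind⟩ := exists_cycleGraph_isIndContained_of_not_isAcyclic hcyc
    rcases hn.eq_or_lt with rfl | hn
    · have htriangle : ¬ F.CliqueFree 3 := by
        rwa [not_cliqueFree_iff_top_isContained, ← top_isIndContained_iff_top_isContained,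
          ← cycleGraph_three_eq_top]
      exact htriangle (cliqueFree_cone_succ_iff.mp (isEmpty_top_embedding_iff_cliqueFree.mp hK4))
    · exact (hchordal n hn).false (hind.trans isIndContained_cone).some
  · refine isAcyclic_iff_free_cycleGraph.mp hF n (by omega) ?_
    exact (isIndContained_of_isIndContained_cone (cycleGraph_exists_not_adj hn) ⟨e⟩).isContained
  · exact isEmpty_top_embedding_iff_cliqueFree.mpr
      (cliqueFree_cone_succ_iff.mpr (hF.cliqueFree le_rfl))
end
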